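/- arXiv:1709.07787 — 6 statements merged into one kernel-verified Lean document; each statement's English description precedes it below -/
import Mathlib

section
/- Let λ > 0 and let S : ℝ → ℝ be a twice continuously differentiable function satisfying S''(ξ) − S(ξ) + λ·S(ξ)³ = 0 for all ξ, with S(ξ) → 0 as ξ → +∞ and as ξ → −∞, and S not identically zero. Then there exist c ∈ ℝ and σ ∈ {−1, +1} such that S(ξ) = σ·√(2/λ)/cosh(ξ − c) for all ξ ∈ ℝ. In particular, if S is moreover even, then c = 0, so the only two nontrivial even decaying solutions are ±√(2/λ)/cosh(ξ). -/
/-!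
The energy `S'² - S² + (λ/2) S⁴` is conserved, and it vanishes because `S → 0` at `+∞` forces
`S'` to approach `0` along some sequence (mean value theorem). At a maximum point `c` of `|S|`
this gives `S'(c) = 0` and `λ S(c)² = 2`, so `S(c) / cosh (ξ - c)`, which also has zero energy,
solves the same initial value problem at `c`. Both phase curves stay in the compact zero-energy
level set, on which the `C¹` vector field is Lipschitz, so they coincide by Grönwall uniqueness.
-/

open Real Set Filter Topology

theorem ODE_solution_unique_univ_of_contDiff_of_isCompact {E : Type*} [NormedAddCommGroup E]
    [NormedSpace ℝ E] {v : E → E} (hv : ContDiff ℝ 1 v) {s : Set E} (hs : IsCompact s)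
    {f g : ℝ → E} (hf : ∀ t, HasDerivAt f (v (f t)) t ∧ f t ∈ s)
    (hg : ∀ t, HasDerivAt g (v (g t)) t ∧ g t ∈ s) {t₀ : ℝ} (heq : f t₀ = g t₀) : f = g := by
  obtain ⟨K, hK⟩ := hv.locallyLipschitz.locallyLipschitzOn.exists_lipschitzOnWith_of_compact hs
  exact ODE_solution_unique_univ (v := fun _ ↦ v) (s := fun _ ↦ s) (fun _ ↦ hK) hf hg heq

theorem exists_tendsto_atTop_deriv_comp_tendsto_zero {f f' : ℝ → ℝ} {a : ℝ}
    (hf : ∀ t, HasDerivAt f (f' t) t) (hfa : Tendsto f atTop (𝓝 a)) :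
    ∃ ζ : ℝ → ℝ, Tendsto ζ atTop atTop ∧ Tendsto (f' ∘ ζ) atTop (𝓝 0) := by
  have hmvt (t : ℝ) : ∃ z ∈ Ioo t (t + 1), f' z = (f (t + 1) - f t) / (t + 1 - t) :=
    exists_hasDerivAt_eq_slope f f' (lt_add_one t)
      (HasDerivAt.continuousOn fun x _ ↦ hf x) fun x _ ↦ hf x
  choose ζ hζ hslope using hmvt
  refine ⟨ζ, tendsto_atTop_mono (fun t ↦ (hζ t).1.le) tendsto_id, ?_⟩
  have hdiff : Tendsto (fun t ↦ f (t + 1) - f t) atTop (𝓝 (a - a)) :=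
    (hfa.comp (tendsto_atTop_add_const_right _ 1 tendsto_id)).sub hfa
  rw [sub_self] at hdiff
  exact hdiff.congr fun t ↦ by simp [Function.comp, hslope]

theorem exists_forall_abs_le_abs_of_tendsto {f : ℝ → ℝ} (hf : Continuous f)
    (htop : Tendsto f atTop (𝓝 0)) (hbot : Tendsto f atBot (𝓝 0)) {ξ : ℝ} (hξ : f ξ ≠ 0) :
    ∃ c, ∀ t, |f t| ≤ |f c| := by
  have hpos : |(0 : ℝ)| < |f ξ| := by simpa using hξ
  refine hf.abs.exists_forall_ge' ξ ?_
  rw [cocompact_eq_atBot_atTop, eventually_sup]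
  exact ⟨(hbot.abs.eventually_lt_const hpos).mono fun _ ↦ le_of_lt,
    (htop.abs.eventually_lt_const hpos).mono fun _ ↦ le_of_lt⟩

theorem hasDerivAt_deriv_of_contDiff_two {f : ℝ → ℝ} (hf : ContDiff ℝ 2 f) (t : ℝ) :
    HasDerivAt (deriv f) (deriv (deriv f) t) t := by
  rw [show (2 : WithTop ℕ∞) = 1 + 1 from rfl, contDiff_succ_iff_deriv] at hf
  exact (hf.2.2.differentiable one_ne_zero t).hasDerivAt

theorem hasDerivAt_cosh_sub (c t : ℝ) : HasDerivAt (fun t ↦ cosh (t - c)) (sinh (t - c)) t := by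
  simpa using ((hasDerivAt_id t).sub_const c).cosh

theorem hasDerivAt_sinh_sub (c t : ℝ) : HasDerivAt (fun t ↦ sinh (t - c)) (cosh (t - c)) t := by
  simpa using ((hasDerivAt_id t).sub_const c).sinh

namespace Soliton

variable {lam : ℝ} {x y : ℝ → ℝ}

def field (lam : ℝ) (p : ℝ × ℝ) : ℝ × ℝ := (p.2, p.1 - lam * p.1 ^ 3)

noncomputable def energy (lam : ℝ) (p : ℝ × ℝ) : ℝ := p.2 ^ 2 - p.1 ^ 2 + lam / 2 * p.1 ^ 4

theorem contDiff_field : ContDiff ℝ 1 (field lam) := by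
  unfold field; fun_prop

theorem continuous_energy : Continuous (energy lam) := by
  unfold energy; fun_prop

theorem norm_le_of_energy_eq_zero (hlam : 0 < lam) {p : ℝ × ℝ} (hp : energy lam p = 0) :
    ‖p‖ ≤ √(2 / lam) := by
  unfold energy at hp
  have hx : p.1 ^ 2 ≤ 2 / lam := by
    rw [le_div_iff₀ hlam]; nlinarith [sq_nonneg p.2, sq_nonneg (p.1 ^ 2)]
  have hy : p.2 ^ 2 ≤ p.1 ^ 2 := by nlinarith [sq_nonneg (p.1 ^ 2)]
  rw [norm_prod_le_iff, Real.norm_eq_abs, Real.norm_eq_abs, ← Real.sqrt_sq_eq_abs,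
    ← Real.sqrt_sq_eq_abs]
  exact ⟨Real.sqrt_le_sqrt hx, Real.sqrt_le_sqrt (hy.trans hx)⟩

theorem isCompact_energy_eq_zero (hlam : 0 < lam) : IsCompact {p | energy lam p = 0} :=
  Metric.isCompact_of_isClosed_isBounded (isClosed_eq continuous_energy continuous_const)
    ((Metric.isBounded_closedBall (x := 0) (r := √(2 / lam))).subset
      fun _ hp ↦ mem_closedBall_zero_iff.2 (norm_le_of_energy_eq_zero hlam hp))

theorem energy_eq (hx : ∀ t, HasDerivAt x (y t) t)
    (hy : ∀ t, HasDerivAt y (x t - lam * x t ^ 3) t) (t s : ℝ) :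
    energy lam (x t, y t) = energy lam (x s, y s) := by
  have hE (t : ℝ) : HasDerivAt (fun t ↦ energy lam (x t, y t)) 0 t := by
    have := (((hy t).pow 2).sub ((hx t).pow 2)).add (((hx t).pow 4).const_mul (lam / 2))
    exact this.congr_deriv (by push_cast; ring)
  exact is_const_of_deriv_eq_zero (fun t ↦ (hE t).differentiableAt) (fun t ↦ (hE t).deriv) t s

theorem energy_eq_zero_of_tendsto (hx : ∀ t, HasDerivAt x (y t) t)
    (hy : ∀ t, HasDerivAt y (x t - lam * x t ^ 3) t) (hlim : Tendsto x atTop (𝓝 0)) (t : ℝ) :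
    energy lam (x t, y t) = 0 := by
  obtain ⟨ζ, hζ, hyζ⟩ := exists_tendsto_atTop_deriv_comp_tendsto_zero hx hlim
  have h : Tendsto (fun s ↦ energy lam (x (ζ s), y (ζ s))) atTop (𝓝 (energy lam (0, 0))) :=
    (continuous_energy.tendsto _).comp ((hlim.comp hζ).prodMk_nhds hyζ)
  simp only [energy_eq hx hy _ t] at h
  simpa [energy] using tendsto_const_nhds_iff.1 h

theorem eq_of_energy_eq_zero (hlam : 0 < lam) {u w : ℝ → ℝ}
    (hx : ∀ t, HasDerivAt x (y t) t) (hy : ∀ t, HasDerivAt y (x t - lam * x t ^ 3) t)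
    (hu : ∀ t, HasDerivAt u (w t) t) (hw : ∀ t, HasDerivAt w (u t - lam * u t ^ 3) t)
    (hxy : ∀ t, energy lam (x t, y t) = 0) (huw : ∀ t, energy lam (u t, w t) = 0)
    {t₀ : ℝ} (h₀ : x t₀ = u t₀) (h₀' : y t₀ = w t₀) : x = u := by
  have h := ODE_solution_unique_univ_of_contDiff_of_isCompact contDiff_field
    (isCompact_energy_eq_zero hlam) (fun t ↦ ⟨(hx t).prodMk (hy t), hxy t⟩)
    (fun t ↦ ⟨(hu t).prodMk (hw t), huw t⟩) (Prod.ext h₀ h₀')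
  exact funext fun t ↦ congrArg Prod.fst (congrFun h t)

theorem hasDerivAt_sech (a c t : ℝ) :
    HasDerivAt (fun t ↦ a / cosh (t - c)) (-(a * sinh (t - c)) / cosh (t - c) ^ 2) t :=
  ((hasDerivAt_const t a).div (hasDerivAt_cosh_sub c t) (cosh_pos _).ne').congr_deriv (by simp)

theorem hasDerivAt_deriv_sech {a : ℝ} (ha : lam * a ^ 2 = 2) (c t : ℝ) :
    HasDerivAt (fun t ↦ -(a * sinh (t - c)) / cosh (t - c) ^ 2)
      (a / cosh (t - c) - lam * (a / cosh (t - c)) ^ 3) t := by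
  have hc := cosh_pos (t - c)
  have hnum : HasDerivAt (fun t ↦ -(a * sinh (t - c))) (-(a * cosh (t - c))) t :=
    ((hasDerivAt_sinh_sub c t).const_mul a).neg
  have hden : HasDerivAt (fun t ↦ cosh (t - c) ^ 2) (2 * cosh (t - c) * sinh (t - c)) t :=
    ((hasDerivAt_cosh_sub c t).pow 2).congr_deriv (by ring)
  refine (hnum.div hden (by positivity)).congr_deriv ?_
  field_simp
  linear_combination a * ha - 2 * a * cosh_sq (t - c)

theorem energy_sech {a : ℝ} (ha : lam * a ^ 2 = 2) (c t : ℝ) :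
    energy lam (a / cosh (t - c), -(a * sinh (t - c)) / cosh (t - c) ^ 2) = 0 := by
  have := cosh_pos (t - c)
  unfold energy
  field_simp
  linear_combination a ^ 2 * ha - 2 * a ^ 2 * cosh_sq (t - c)

theorem eq_zero_and_mul_sq_eq_two_of_abs_le (hx : ∀ t, HasDerivAt x (y t) t)
    (hE : ∀ t, energy lam (x t, y t) = 0) {c : ℝ} (hc : ∀ t, |x t| ≤ |x c|) (hxc : x c ≠ 0) :
    y c = 0 ∧ lam * x c ^ 2 = 2 := by
  have hmax : IsLocalMax (fun t ↦ x t ^ 2) c := Eventually.of_forall fun t ↦ sq_le_sq.2 (hc t)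
  have hyc : y c = 0 := by
    simpa [hxc] using hmax.hasDerivAt_eq_zero ((hx c).pow 2)
  refine ⟨hyc, ?_⟩
  have h := hE c
  simp only [energy, hyc] at h
  have : x c ^ 2 * (lam * x c ^ 2 - 2) = 0 := by linear_combination 2 * h
  simpa [hxc, sub_eq_zero] using this

theorem eq_zero_of_sech_even {a c : ℝ} (ha : a ≠ 0)
    (h : ∀ t, a / cosh (-t - c) = a / cosh (t - c)) : c = 0 := by
  have hcosh : cosh (-c - c) = cosh (c - c) := by
    have := h c
    rwa [div_eq_div_iff (cosh_pos _).ne' (cosh_pos _).ne', mul_right_inj' ha, eq_comm] at this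
  have := cosh_le_cosh.1 hcosh.le
  simp only [sub_self, abs_zero, abs_nonpos_iff] at this
  linarith

end Soliton

/-- Let `λ > 0` and let `S : ℝ → ℝ` be a `C²` function satisfying
`S'' − S + λS³ = 0`, tending to `0` at `±∞` and not identically zero. Then there are
`c ∈ ℝ` and `σ ∈ {−1,+1}` with `S(ξ) = σ·√(2/λ)/cosh(ξ − c)` for all `ξ`; and if `S` is
moreover even, then `c = 0`, so the only two nontrivial even decaying solutions are
`±√(2/λ)/cosh ξ`. -/
theorem soliton_profile_unique (lam : ℝ) (hlam : 0 < lam) (S : ℝ → ℝ)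
    (hreg : ContDiff ℝ 2 S)
    (hode : ∀ ξ, deriv (deriv S) ξ - S ξ + lam * S ξ ^ 3 = 0)
    (htop : Filter.Tendsto S Filter.atTop (nhds 0))
    (hbot : Filter.Tendsto S Filter.atBot (nhds 0))
    (hne : ∃ ξ, S ξ ≠ 0) :
    ∃ c σ : ℝ, (σ = 1 ∨ σ = -1) ∧
      (∀ ξ, S ξ = σ * (Real.sqrt (2 / lam) / Real.cosh (ξ - c))) ∧
      ((∀ ξ, S (-ξ) = S ξ) → c = 0) := by
  have hS t : HasDerivAt S (deriv S t) t := (hreg.differentiable two_ne_zero t).hasDerivAt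
  have hS' t : HasDerivAt (deriv S) (S t - lam * S t ^ 3) t := by
    simpa [show deriv (deriv S) t = S t - lam * S t ^ 3 by linarith [hode t]]
      using hasDerivAt_deriv_of_contDiff_two hreg t
  have hE := Soliton.energy_eq_zero_of_tendsto hS hS' htop
  obtain ⟨ξ, hξ⟩ := hne
  obtain ⟨c, hc⟩ := exists_forall_abs_le_abs_of_tendsto hreg.continuous htop hbot hξ
  have hSc : S c ≠ 0 := abs_pos.1 ((abs_pos.2 hξ).trans_le (hc ξ))
  obtain ⟨hS'c, hamp⟩ := Soliton.eq_zero_and_mul_sq_eq_two_of_abs_le hS hE hc hSc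
  have hprofile : S = fun t ↦ S c / cosh (t - c) :=
    Soliton.eq_of_energy_eq_zero hlam hS hS' (Soliton.hasDerivAt_sech _ c)
      (Soliton.hasDerivAt_deriv_sech hamp c) hE (Soliton.energy_sech hamp c) (t₀ := c) (by simp) (by simp [hS'c])
  have hm0 : √(2 / lam) ≠ 0 := (sqrt_pos.2 (by positivity)).ne'
  refine ⟨c, S c / √(2 / lam), ?_, fun t ↦ ?_, fun heven ↦ Soliton.eq_zero_of_sech_even hSc ?_⟩
  · refine sq_eq_one_iff.1 ?_
    rw [div_pow, sq_sqrt (by positivity)]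
    field_simp
    linarith
  · rw [congrFun hprofile t]; field_simp
  · intro t; rw [← congrFun hprofile, ← congrFun hprofile, heven]
end

section
/- Let λ > 0 and S(ξ) = √(2/λ)/cosh(ξ), and let P be a polynomial with real coefficients. Then: (i) there exists a polynomial Q with real coefficients such that the function σ(ξ) := S(ξ)·Q(S(ξ)²) satisfies σ''(ξ) − σ(ξ) + (6/cosh²ξ)·σ(ξ) = S(ξ)³·P(S(ξ)²) for all ξ ∈ ℝ; and (ii) if σ̃ : ℝ → ℝ is any twice continuously differentiable even function with σ̃(ξ) → 0 as ξ → ±∞ satisfying the same equation σ̃'' − σ̃ + (6/cosh²ξ)·σ̃ = S³·P(S²), then σ̃ = σ. -/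
/-!
Put `σ = S·Q(S²)`. Since `S = c / cosh` with `λc² = 2` satisfies `S'² = S² - λS⁴/2` and
`S'' = S - λS³`, and `6 / cosh² = 3λS²`, the operator `L` becomes `L σ = S³·(T Q)(S²)` for an
explicit second order operator `T` on polynomials. On monomials `T` is triangular,
`T Xᵏ = λ(2 - 3k - 2k²) Xᵏ + 4k(k + 1) Xᵏ⁻¹`, with diagonal `-λ(2k - 1)(k + 2) ≠ 0`, so it is a
bijection of every space of polynomials of bounded degree; this gives `Q`.

For uniqueness, the difference `u` of two even decaying solutions solves `u'' = (1 - 6/cosh²) u`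
with `u'(0) = 0`. By uniqueness for this linear ODE, `u = u(0)·U` for the explicit even solution `U`
with `U(0) = 1`, `U'(0) = 0`. As `U → -∞`, decay of `u` forces `u(0) = 0`.
-/

open Polynomial Real Filter Topology
open scoped NNReal

namespace Soliton

section Generic

variable {𝕜 F : Type*} [NontriviallyNormedField 𝕜] [NormedAddCommGroup F] [NormedSpace 𝕜 F]

theorem deriv_zero_of_even [CharZero 𝕜] {f : 𝕜 → F} (hf : ∀ x, f (-x) = f x) : deriv f 0 = 0 := by
  have h := deriv_comp_neg (f := f) (x := 0)
  simp only [hf, neg_zero] at h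
  rwa [eq_neg_iff_add_eq_zero, ← two_smul 𝕜, smul_eq_zero, or_iff_right two_ne_zero] at h

theorem hasDerivAt_deriv_of_contDiff_two {f : 𝕜 → F} (hf : ContDiff 𝕜 2 f) (x : 𝕜) :
    HasDerivAt (deriv f) (deriv (deriv f) x) x := by
  have h := hf.differentiable_iteratedDeriv 1 (by norm_num)
  rw [iteratedDeriv_one] at h
  exact (h x).hasDerivAt

theorem deriv_deriv_polynomial_eval_comp {f f' f'' : 𝕜 → 𝕜} (hf : ∀ x, HasDerivAt f (f' x) x)
    (hf' : ∀ x, HasDerivAt f' (f'' x) x) (G : 𝕜[X]) (x : 𝕜) :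
    deriv (deriv fun y => G.eval (f y)) x
      = G.derivative.derivative.eval (f x) * f' x ^ 2 + G.derivative.eval (f x) * f'' x := by
  have h : deriv (fun y => G.eval (f y)) = fun y => G.derivative.eval (f y) * f' y :=
    funext fun y => ((G.hasDerivAt (f y)).comp y (hf y)).deriv
  rw [h]
  exact ((((G.derivative.hasDerivAt (f x)).comp x (hf x)).mul (hf' x)).congr_deriv
    (by simp only [Function.comp_apply]; ring)).deriv

end Generic

theorem eq_zero_of_hasDerivAt_of_hasDerivAt_mul {a : ℝ → ℝ} {K : ℝ≥0} (ha : ∀ t, |a t| ≤ K)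
    {u u' : ℝ → ℝ} (hu : ∀ t, HasDerivAt u (u' t) t) (hu' : ∀ t, HasDerivAt u' (a t * u t) t)
    (h0 : u 0 = 0) (h0' : u' 0 = 0) : u = 0 := by
  have hv : ∀ t, LipschitzWith (max 1 K) fun p : ℝ × ℝ => (p.2, a t * p.1) := fun t =>
    LipschitzWith.prod_snd.prodMk
      (((lipschitzWith_smul (a t)).comp LipschitzWith.prod_fst).weaken (by
        rw [mul_one, ← NNReal.coe_le_coe, coe_nnnorm, Real.norm_eq_abs]; exact ha t))
  have h := ODE_solution_unique_univ (fun t => (hv t).lipschitzOnWith (s := Set.univ))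
    (f := fun t => (u t, u' t)) (g := 0) (t₀ := 0)
    (fun t => ⟨(hu t).prodMk (hu' t), trivial⟩)
    (fun t => ⟨(hasDerivAt_const t (0 : ℝ × ℝ)).congr_deriv (by ext <;> simp), trivial⟩)
    (by simp [h0, h0'])
  exact funext fun t => congrArg Prod.fst (congrFun h t)

theorem tendsto_cosh_atTop : Tendsto cosh atTop atTop := by
  refine tendsto_atTop_mono (fun x => ?_) (tendsto_exp_atTop.atTop_div_const two_pos)
  rw [cosh_eq]
  linarith [exp_pos (-x)]

noncomputable def reducedLinearization (lam : ℝ) : ℝ[X] →ₗ[ℝ] ℝ[X] where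
  toFun Q := 4 * X * derivative (derivative Q) + 8 * derivative Q
    + C lam * (2 * Q - 5 * X * derivative Q - 2 * X ^ 2 * derivative (derivative Q))
  map_add' Q R := by simp only [derivative_add]; ring
  map_smul' a Q := by simp only [smul_eq_C_mul, derivative_C_mul, RingHom.id_apply]; ring

theorem coeff_reducedLinearization (lam : ℝ) (Q : ℝ[X]) (k : ℕ) :
    (reducedLinearization lam Q).coeff k
      = 4 * (k + 1) * (k + 2) * Q.coeff (k + 1) + lam * (2 - 3 * k - 2 * k ^ 2) * Q.coeff k := by
  simp only [reducedLinearization, LinearMap.coe_mk, AddHom.coe_mk, mul_assoc, coeff_add,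
    coeff_sub, coeff_C_mul, coeff_ofNat_mul, coeff_X_pow_mul', coeff_derivative]
  rcases k with _ | _ | k <;> simp [coeff_X_mul, coeff_derivative] <;> ring

theorem two_sub_three_mul_sub_two_mul_sq_ne_zero (k : ℕ) : (2 - 3 * k - 2 * k ^ 2 : ℝ) ≠ 0 := by
  rcases k with _ | k
  · norm_num
  · push_cast; nlinarith

theorem reducedLinearization_injective {lam : ℝ} (hlam : lam ≠ 0) :
    Function.Injective (reducedLinearization lam) := by
  rw [← LinearMap.ker_eq_bot, LinearMap.ker_eq_bot']
  intro Q hQ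
  by_contra hQ0
  have := congrArg (coeff · Q.natDegree) hQ
  simp only [coeff_reducedLinearization, coeff_eq_zero_of_natDegree_lt (Nat.lt_succ_self _),
    coeff_zero] at this
  simp [hlam, two_sub_three_mul_sub_two_mul_sq_ne_zero, hQ0] at this

theorem reducedLinearization_mapsTo (lam : ℝ) (n : ℕ) :
    ∀ Q ∈ degreeLT ℝ n, reducedLinearization lam Q ∈ degreeLT ℝ n := by
  simp only [mem_degreeLT, degree_lt_iff_coeff_zero, coeff_reducedLinearization]
  intro Q hQ m hm
  simp [hQ m hm, hQ (m + 1) (by omega)]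

theorem reducedLinearization_surjective {lam : ℝ} (hlam : lam ≠ 0) :
    Function.Surjective (reducedLinearization lam) := by
  intro P
  let T := (reducedLinearization lam).restrict (reducedLinearization_mapsTo lam (P.natDegree + 1))
  have hT : Function.Surjective T := LinearMap.injective_iff_surjective.mp fun Q R h =>
    Subtype.ext (reducedLinearization_injective hlam (congrArg Subtype.val h))
  obtain ⟨Q, hQ⟩ := hT ⟨P, mem_degreeLT.mpr
    (degree_le_natDegree.trans_lt (by exact_mod_cast Nat.lt_succ_self _))⟩
  exact ⟨Q, congrArg Subtype.val hQ⟩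

noncomputable def solitonLinearization (f : ℝ → ℝ) (ξ : ℝ) : ℝ :=
  deriv (deriv f) ξ - f ξ + 6 / cosh ξ ^ 2 * f ξ

theorem eval_odd_linearization (lam : ℝ) (Q : ℝ[X]) (y : ℝ) :
    (X * Q.comp (X ^ 2)).derivative.derivative.eval y * (y ^ 2 - lam / 2 * y ^ 4)
      + (X * Q.comp (X ^ 2)).derivative.eval y * (y - lam * y ^ 3)
      + (3 * lam * y ^ 2 - 1) * (X * Q.comp (X ^ 2)).eval y
      = y ^ 3 * (reducedLinearization lam Q).eval (y ^ 2) := by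
  simp only [reducedLinearization, LinearMap.coe_mk, AddHom.coe_mk, derivative_mul, derivative_X,
    derivative_comp, derivative_X_pow_succ, derivative_one, Nat.cast_one, map_add,
    map_one, pow_one, one_mul, add_zero, zero_mul, mul_one, zero_add, eval_add, eval_sub, eval_mul,
    eval_one, eval_X, eval_comp, eval_pow, eval_ofNat, eval_C]
  ring

theorem hasDerivAt_div_cosh (c ξ : ℝ) :
    HasDerivAt (fun x => c / cosh x) (-c * sinh ξ / cosh ξ ^ 2) ξ := by
  refine ((hasDerivAt_const ξ c).div (hasDerivAt_cosh ξ) (cosh_pos ξ).ne').congr_deriv ?_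
  ring

theorem hasDerivAt_neg_mul_sinh_div_cosh_sq (c ξ : ℝ) :
    HasDerivAt (fun x => -c * sinh x / cosh x ^ 2) (c / cosh ξ - 2 * c / cosh ξ ^ 3) ξ := by
  refine (((hasDerivAt_sinh ξ).const_mul (-c)).div ((hasDerivAt_cosh ξ).pow 2)
    (pow_pos (cosh_pos ξ) 2).ne').congr_deriv ?_
  have := (cosh_pos ξ).ne'
  simp only [Pi.pow_apply, Nat.cast_ofNat, Nat.add_one_sub_one, pow_one]
  field_simp
  linear_combination (2 * c) * sinh_sq ξ

theorem solitonLinearization_odd_polynomial {c lam : ℝ} (hc : lam * c ^ 2 = 2) (Q : ℝ[X])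
    (ξ : ℝ) :
    solitonLinearization (fun x => c / cosh x * Q.eval ((c / cosh x) ^ 2)) ξ
      = (c / cosh ξ) ^ 3 * (reducedLinearization lam Q).eval ((c / cosh ξ) ^ 2) := by
  have hσ : (fun x => c / cosh x * Q.eval ((c / cosh x) ^ 2))
      = fun x => (X * Q.comp (X ^ 2)).eval (c / cosh x) := by
    simp [eval_comp]
  rw [hσ, solitonLinearization, deriv_deriv_polynomial_eval_comp (hasDerivAt_div_cosh c)
    (hasDerivAt_neg_mul_sinh_div_cosh_sq c), ← eval_odd_linearization lam]
  have hcosh := (cosh_pos ξ).ne'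
  have h1 : (-c * sinh ξ / cosh ξ ^ 2) ^ 2 = (c / cosh ξ) ^ 2 - lam / 2 * (c / cosh ξ) ^ 4 := by
    field_simp
    linear_combination (2 * c ^ 2) * sinh_sq ξ + c ^ 2 * hc
  have h2 : c / cosh ξ - 2 * c / cosh ξ ^ 3 = c / cosh ξ - lam * (c / cosh ξ) ^ 3 := by
    field_simp
    linear_combination c * hc
  have h3 : 6 / cosh ξ ^ 2 = 3 * lam * (c / cosh ξ) ^ 2 := by
    field_simp
    linear_combination -3 * hc
  linear_combination (X * Q.comp (X ^ 2)).derivative.derivative.eval (c / cosh ξ) * h1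
    + (X * Q.comp (X ^ 2)).derivative.eval (c / cosh ξ) * h2
    + (X * Q.comp (X ^ 2)).eval (c / cosh ξ) * h3

theorem contDiff_odd_polynomial_div_cosh (c : ℝ) (Q : ℝ[X]) :
    ContDiff ℝ 2 fun x => c / cosh x * Q.eval ((c / cosh x) ^ 2) := by
  have hS : ContDiff ℝ 2 fun x => c / cosh x :=
    contDiff_const.div contDiff_cosh fun x => (cosh_pos x).ne'
  simpa using hS.mul ((Q.contDiff_aeval 2).comp (hS.pow 2))

theorem tendsto_odd_polynomial_div_cosh (c : ℝ) (Q : ℝ[X]) :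
    Tendsto (fun x => c / cosh x * Q.eval ((c / cosh x) ^ 2)) atTop (𝓝 0) := by
  have hS : Tendsto (fun x => c / cosh x) atTop (𝓝 0) :=
    tendsto_const_nhds.div_atTop tendsto_cosh_atTop
  simpa using hS.mul ((Q.continuous.tendsto _).comp (hS.pow 2))

-- Obtained by reduction of order from the odd decaying solution `sinh / cosh² = -S' / c`.
noncomputable def evenSolution (ξ : ℝ) : ℝ :=
  3 / (2 * cosh ξ) - cosh ξ / 2 - 3 / 2 * ξ * sinh ξ / cosh ξ ^ 2

noncomputable def evenSolutionDeriv (ξ : ℝ) : ℝ :=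
  -3 * sinh ξ / cosh ξ ^ 2 - sinh ξ / 2 - 3 * ξ / cosh ξ ^ 3 + 3 / 2 * ξ / cosh ξ

theorem hasDerivAt_evenSolution (ξ : ℝ) : HasDerivAt evenSolution (evenSolutionDeriv ξ) ξ := by
  have hc := (cosh_pos ξ).ne'
  have h := (((hasDerivAt_const ξ 3).div ((hasDerivAt_cosh ξ).const_mul 2) (by positivity)).sub
    ((hasDerivAt_cosh ξ).div_const 2)).sub ((((hasDerivAt_id ξ).const_mul (3 / 2)).mul
      (hasDerivAt_sinh ξ)).div ((hasDerivAt_cosh ξ).pow 2) (pow_ne_zero 2 hc))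
  refine h.congr_deriv ?_
  simp only [evenSolutionDeriv, Pi.pow_apply, Pi.mul_apply, id]
  field_simp
  linear_combination (6 * ξ * cosh ξ) * sinh_sq ξ

theorem hasDerivAt_evenSolutionDeriv (ξ : ℝ) :
    HasDerivAt evenSolutionDeriv ((1 - 6 / cosh ξ ^ 2) * evenSolution ξ) ξ := by
  have hc := (cosh_pos ξ).ne'
  have h := (((((hasDerivAt_sinh ξ).const_mul (-3)).div ((hasDerivAt_cosh ξ).pow 2)
    (pow_ne_zero 2 hc)).sub ((hasDerivAt_sinh ξ).div_const 2)).sub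
    (((hasDerivAt_id ξ).const_mul 3).div ((hasDerivAt_cosh ξ).pow 3) (pow_ne_zero 3 hc))).add
    (((hasDerivAt_id ξ).const_mul (3 / 2)).div (hasDerivAt_cosh ξ) hc)
  refine h.congr_deriv ?_
  simp only [evenSolution, Pi.pow_apply, id]
  field_simp
  linear_combination (12 * cosh ξ ^ 3) * sinh_sq ξ

theorem evenSolution_zero : evenSolution 0 = 1 := by norm_num [evenSolution]

theorem evenSolutionDeriv_zero : evenSolutionDeriv 0 = 0 := by simp [evenSolutionDeriv]

theorem tendsto_evenSolution_atTop : Tendsto evenSolution atTop atBot := by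
  refine tendsto_atBot_mono' _ ?_ (tendsto_atBot_add_const_left _ (3 / 2)
    (tendsto_neg_atTop_atBot.comp (tendsto_cosh_atTop.atTop_div_const two_pos)))
  filter_upwards [eventually_ge_atTop 0] with ξ hξ
  have h1 : 3 / (2 * cosh ξ) ≤ 3 / 2 := by gcongr; linarith [one_le_cosh ξ]
  have h2 : 0 ≤ 3 / 2 * ξ * sinh ξ / cosh ξ ^ 2 := by have := sinh_nonneg_iff.mpr hξ; positivity
  simp only [evenSolution, Function.comp_apply]
  linarith

theorem abs_one_sub_six_div_cosh_sq_le (ξ : ℝ) : |1 - 6 / cosh ξ ^ 2| ≤ 5 := by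
  have h : 6 / cosh ξ ^ 2 ≤ 6 := div_le_self (by norm_num) (one_le_pow₀ (one_le_cosh ξ))
  rw [abs_le]
  constructor <;> linarith [div_nonneg (by norm_num : (0 : ℝ) ≤ 6) (sq_nonneg (cosh ξ))]

theorem eq_zero_of_even_of_tendsto {u u' : ℝ → ℝ} (hu : ∀ ξ, HasDerivAt u (u' ξ) ξ)
    (hu' : ∀ ξ, HasDerivAt u' ((1 - 6 / cosh ξ ^ 2) * u ξ) ξ) (heven : ∀ ξ, u (-ξ) = u ξ)
    (htop : Tendsto u atTop (𝓝 0)) : u = 0 := by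
  have hu'0 : u' 0 = 0 := (hu 0).deriv ▸ deriv_zero_of_even heven
  have hU : ∀ ξ, u ξ = u 0 * evenSolution ξ := by
    have h := eq_zero_of_hasDerivAt_of_hasDerivAt_mul (K := 5) abs_one_sub_six_div_cosh_sq_le
      (fun ξ => (hu ξ).sub ((hasDerivAt_evenSolution ξ).const_mul (u 0)))
      (fun ξ => ((hu' ξ).sub ((hasDerivAt_evenSolutionDeriv ξ).const_mul (u 0))).congr_deriv
        (by simp only [Pi.sub_apply]; ring))
      (by simp [evenSolution_zero]) (by simp [hu'0, evenSolutionDeriv_zero])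
    exact fun ξ => sub_eq_zero.mp (congrFun h ξ)
  have hu0 : u 0 = 0 := by
    by_contra hne
    refine not_tendsto_nhds_of_tendsto_atBot tendsto_evenSolution_atTop 0 ?_
    refine (zero_div (u 0) ▸ htop.div_const (u 0)).congr fun ξ => ?_
    rw [hU ξ, mul_div_cancel_left₀ _ hne]
  funext ξ
  rw [hU ξ, hu0, zero_mul, Pi.zero_apply]

theorem eq_of_solitonLinearization_eq {f g : ℝ → ℝ} (hf : ContDiff ℝ 2 f) (hg : ContDiff ℝ 2 g)
    (hf_even : ∀ ξ, f (-ξ) = f ξ) (hg_even : ∀ ξ, g (-ξ) = g ξ)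
    (hf_top : Tendsto f atTop (𝓝 0)) (hg_top : Tendsto g atTop (𝓝 0))
    (h : ∀ ξ, solitonLinearization f ξ = solitonLinearization g ξ) : f = g := by
  have hd : ∀ {f : ℝ → ℝ}, ContDiff ℝ 2 f → ∀ x, HasDerivAt f (deriv f x) x :=
    fun hf x => (hf.differentiable (by norm_num) x).hasDerivAt
  refine sub_eq_zero.mp (eq_zero_of_even_of_tendsto (u' := deriv f - deriv g)
    (fun ξ => (hd hf ξ).sub (hd hg ξ))
    (fun ξ => ((hasDerivAt_deriv_of_contDiff_two hf ξ).sub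
      (hasDerivAt_deriv_of_contDiff_two hg ξ)).congr_deriv ?_)
    (fun ξ => by simp [hf_even, hg_even]) (by rw [← sub_self 0]; exact hf_top.sub hg_top))
  have := h ξ
  simp only [solitonLinearization] at this
  simp only [Pi.sub_apply]
  linear_combination this

end Soliton

/-- Let `λ > 0`, `S(ξ) = √(2/λ)/cosh ξ`, and `P` a real polynomial. Then
(i) there is a real polynomial `Q` such that `σ(ξ) := S(ξ)·Q(S(ξ)²)` satisfies
`σ'' − σ + (6/cosh²ξ)·σ = S³·P(S²)` on `ℝ`; and (ii) any `C²` even function tending to `0`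
at `±∞` satisfying the same equation equals `σ`. -/
theorem L_inverse_on_odd_polynomials (lam : ℝ) (hlam : 0 < lam) (S : ℝ → ℝ)
    (hS : ∀ ξ, S ξ = Real.sqrt (2 / lam) / Real.cosh ξ) (P : Polynomial ℝ) :
    ∃ Q : Polynomial ℝ,
      (∀ ξ, deriv (deriv (fun x => S x * Q.eval (S x ^ 2))) ξ
          - S ξ * Q.eval (S ξ ^ 2) + 6 / Real.cosh ξ ^ 2 * (S ξ * Q.eval (S ξ ^ 2))
          = S ξ ^ 3 * P.eval (S ξ ^ 2)) ∧
      (∀ σ' : ℝ → ℝ, ContDiff ℝ 2 σ' → (∀ ξ, σ' (-ξ) = σ' ξ) →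
        Filter.Tendsto σ' Filter.atTop (nhds 0) → Filter.Tendsto σ' Filter.atBot (nhds 0) →
        (∀ ξ, deriv (deriv σ') ξ - σ' ξ + 6 / Real.cosh ξ ^ 2 * σ' ξ
            = S ξ ^ 3 * P.eval (S ξ ^ 2)) →
        ∀ ξ, σ' ξ = S ξ * Q.eval (S ξ ^ 2)) := by
  obtain rfl : S = fun ξ => √(2 / lam) / cosh ξ := funext hS
  have hc : lam * √(2 / lam) ^ 2 = 2 := by
    rw [sq_sqrt (by positivity)]
    field_simp
  obtain ⟨Q, rfl⟩ := Soliton.reducedLinearization_surjective hlam.ne' P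
  have hσ := Soliton.solitonLinearization_odd_polynomial hc Q
  refine ⟨Q, hσ, fun σ' hσ' heven htop _ hL => congrFun ?_⟩
  refine Soliton.eq_of_solitonLinearization_eq hσ'
    (Soliton.contDiff_odd_polynomial_div_cosh _ Q) heven (fun ξ => by simp) htop
    (Soliton.tendsto_odd_polynomial_div_cosh _ Q) fun ξ => ?_
  rw [hσ ξ]
  exact hL ξ
end

section
/- Let σ : ℝ → ℝ be a twice continuously differentiable even function with σ(ξ) → 0 as ξ → ±∞, satisfying σ''(ξ) − σ(ξ) + (6/cosh²ξ)·σ(ξ) = 0 for all ξ ∈ ℝ. Then σ is identically zero. (Equivalently: 0 is not an eigenvalue of the operator L on even decaying functions, so L is injective there.) -/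
/-!
The odd solution `sinh ξ / cosh² ξ` of `Lσ = 0` (a multiple of `S'`) decays together with its
derivative. A decaying solution `σ` has `σ'' = (1 - 6 / cosh²) σ → 0`, hence `σ' → 0` as well, so
the Wronskian of the two solutions, being constant, vanishes; evaluated at `0` it is `σ 0`.
Evenness gives `σ' 0 = 0`, and uniqueness for the linear equation `σ'' = (1 - 6 / cosh²) σ` with
zero Cauchy data forces `σ ≡ 0`.
-/

open Real Filter Set Topology

theorem Function.Even.deriv_odd {𝕜 F : Type*} [NontriviallyNormedField 𝕜] [NormedAddCommGroup F]
    [NormedSpace 𝕜 F] {f : 𝕜 → F} (hf : f.Even) : (deriv f).Odd := fun x => by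
  simpa only [show (fun y => f (-y)) = f from funext hf, neg_neg] using deriv_comp_neg f (-x)

theorem Real.tendsto_inv_cosh_atTop : Tendsto (fun x => (cosh x)⁻¹) atTop (𝓝 0) := by
  refine tendsto_inv_atTop_zero.comp (tendsto_atTop_mono (fun x => ?_)
    (tendsto_exp_atTop.atTop_div_const two_pos))
  rw [cosh_eq]
  linarith [exp_pos (-x)]

theorem tendsto_deriv_atTop_zero {f f' f'' : ℝ → ℝ} {l : ℝ}
    (hf : ∀ x, HasDerivAt f (f' x) x) (hf' : ∀ x, HasDerivAt f' (f'' x) x)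
    (hfl : Tendsto f atTop (𝓝 l)) (hf'' : Tendsto f'' atTop (𝓝 0)) :
    Tendsto f' atTop (𝓝 0) := by
  have hstep : Tendsto (fun x => f (x + 1) - f x) atTop (𝓝 0) := by
    simpa using (hfl.comp (tendsto_atTop_add_const_right _ 1 tendsto_id)).sub hfl
  rw [Metric.tendsto_atTop]
  intro ε hε
  obtain ⟨N₁, hN₁⟩ := Metric.tendsto_atTop.1 hstep (ε / 2) (half_pos hε)
  obtain ⟨N₂, hN₂⟩ := Metric.tendsto_atTop.1 hf'' (ε / 2) (half_pos hε)
  refine ⟨max N₁ N₂, fun x hx => ?_⟩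
  -- `f'` is small at some `c ∈ (x, x + 1)` by the mean value theorem, and `f''` keeps it small.
  obtain ⟨c, ⟨hxc, hcx⟩, hc⟩ := exists_hasDerivAt_eq_slope f f' (lt_add_one x)
    (fun t _ => (hf t).continuousAt.continuousWithinAt) (fun t _ => hf t)
  have hslope : |f' c| < ε / 2 := by
    simpa [hc] using hN₁ x (le_of_max_le_left hx)
  have hvar : ‖f' c - f' x‖ ≤ ε / 2 * ‖c - x‖ :=
    Convex.norm_image_sub_le_of_norm_hasDerivWithin_le (s := Ici N₂)
      (fun t _ => (hf' t).hasDerivWithinAt)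
      (fun t ht => by simpa using (hN₂ t ht).le) (convex_Ici N₂)
      (le_of_max_le_right hx) (by simp only [mem_Ici]; linarith [le_of_max_le_right hx])
  rw [Real.norm_eq_abs, Real.norm_eq_abs, abs_of_pos (sub_pos.2 hxc)] at hvar
  rw [Real.dist_eq, sub_zero]
  calc |f' x| = |f' c - (f' c - f' x)| := by rw [sub_sub_cancel]
    _ ≤ |f' c| + |f' c - f' x| := abs_sub _ _
    _ < ε / 2 + ε / 2 * 1 := add_lt_add_of_lt_of_le hslope (hvar.trans (by gcongr; linarith))
    _ = ε := by ring

section SecondOrderLinear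

variable {q u u' v v' : ℝ → ℝ}

theorem hasDerivAt_wronskian {t : ℝ} (hu : HasDerivAt u (u' t) t)
    (hu' : HasDerivAt u' (q t * u t) t) (hv : HasDerivAt v (v' t) t)
    (hv' : HasDerivAt v' (q t * v t) t) :
    HasDerivAt (fun s => u s * v' s - u' s * v s) 0 t :=
  ((hu.mul hv').sub (hu'.mul hv)).congr_deriv (by ring)

theorem wronskian_eq_zero_of_tendsto_atTop (hu : ∀ t, HasDerivAt u (u' t) t)
    (hu' : ∀ t, HasDerivAt u' (q t * u t) t) (hv : ∀ t, HasDerivAt v (v' t) t)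
    (hv' : ∀ t, HasDerivAt v' (q t * v t) t)
    (hlim : Tendsto (fun s => u s * v' s - u' s * v s) atTop (𝓝 0)) (t : ℝ) :
    u t * v' t - u' t * v t = 0 := by
  have hW t := hasDerivAt_wronskian (hu t) (hu' t) (hv t) (hv' t)
  have hconst : ∀ s, u s * v' s - u' s * v s = u t * v' t - u' t * v t := fun s =>
    is_const_of_deriv_eq_zero (fun x => (hW x).differentiableAt) (fun x => (hW x).deriv) s t
  exact tendsto_nhds_unique (tendsto_const_nhds.congr fun s => (hconst s).symm) hlim

theorem eq_zero_of_second_order_linear_of_initial_eq_zero {K : ℝ} (hq : ∀ t, |q t| ≤ K)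
    (hu : ∀ t, HasDerivAt u (u' t) t) (hu' : ∀ t, HasDerivAt u' (q t * u t) t) {t₀ : ℝ}
    (h₀ : u t₀ = 0) (h₀' : u' t₀ = 0) : u = 0 := by
  have hlip t : LipschitzOnWith (max 1 K.toNNReal) (fun p : ℝ × ℝ => (p.2, q t * p.1)) univ := by
    refine (LipschitzWith.prod_snd.prodMk ((lipschitzWith_smul (q t)).comp
      LipschitzWith.prod_fst)).weaken ?_ |>.lipschitzOnWith
    refine max_le_max le_rfl ?_
    rw [mul_one, ← NNReal.coe_le_coe, coe_nnnorm, Real.norm_eq_abs]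
    exact (hq t).trans (Real.le_coe_toNNReal K)
  have hsol := ODE_solution_unique_univ (g := fun _ => 0) hlip
    (fun t => ⟨(hu t).prodMk (hu' t), mem_univ _⟩)
    (fun t => ⟨(hasDerivAt_const t _).congr_deriv (by ext <;> simp), mem_univ _⟩)
    (show (u t₀, u' t₀) = 0 by simp [h₀, h₀'])
  funext t
  simpa using congrArg Prod.fst (congrFun hsol t)

end SecondOrderLinear

-- `Lσ = 0` reads `σ'' = kernelCoeff * σ`.
noncomputable def kernelCoeff (x : ℝ) : ℝ := 1 - 6 / cosh x ^ 2

noncomputable def kernelMode (x : ℝ) : ℝ := sinh x / cosh x ^ 2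

noncomputable def kernelModeDeriv (x : ℝ) : ℝ := (cosh x)⁻¹ * (2 * (cosh x)⁻¹ ^ 2 - 1)

theorem abs_kernelCoeff_le (x : ℝ) : |kernelCoeff x| ≤ 5 := by
  have hc : 1 ≤ cosh x ^ 2 := one_le_pow₀ (one_le_cosh x)
  have h6 : 6 / cosh x ^ 2 ≤ 6 := div_le_self (by norm_num) hc
  have h0 : 0 ≤ 6 / cosh x ^ 2 := by positivity
  rw [kernelCoeff, abs_le]
  constructor <;> linarith

theorem tendsto_kernelCoeff_atTop : Tendsto kernelCoeff atTop (𝓝 1) := by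
  have h := ((tendsto_inv_cosh_atTop.pow 2).const_mul 6).const_sub 1
  rw [show (1 : ℝ) - 6 * 0 ^ 2 = 1 by norm_num] at h
  exact h.congr fun x => by rw [kernelCoeff, div_eq_mul_inv, inv_pow]

theorem hasDerivAt_kernelMode (x : ℝ) : HasDerivAt kernelMode (kernelModeDeriv x) x := by
  have hc := (cosh_pos x).ne'
  refine ((hasDerivAt_sinh x).div ((hasDerivAt_cosh x).pow 2) (pow_ne_zero 2 hc)).congr_deriv ?_
  simp only [kernelModeDeriv, Pi.pow_apply]
  field_simp
  linear_combination (-2) * cosh x * sinh_sq x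

theorem hasDerivAt_kernelModeDeriv (x : ℝ) :
    HasDerivAt kernelModeDeriv (kernelCoeff x * kernelMode x) x := by
  have hc := (cosh_pos x).ne'
  have hinv := (hasDerivAt_cosh x).inv hc
  refine (hinv.mul (((hinv.pow 2).const_mul 2).sub_const 1)).congr_deriv ?_
  simp only [kernelCoeff, kernelMode, Pi.pow_apply, Pi.inv_apply]
  norm_num
  field_simp
  ring

theorem tendsto_kernelMode_atTop : Tendsto kernelMode atTop (𝓝 0) := by
  refine squeeze_zero_norm (fun x => ?_) tendsto_inv_cosh_atTop
  have hsinh : |sinh x| ≤ cosh x := by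
    rw [abs_sinh, ← cosh_abs]
    exact (sinh_lt_cosh _).le
  have hc2 : 0 < cosh x ^ 2 := by positivity
  calc ‖kernelMode x‖ = |sinh x| / cosh x ^ 2 := by
        rw [Real.norm_eq_abs, kernelMode, abs_div, abs_of_pos hc2]
    _ ≤ cosh x / cosh x ^ 2 := by gcongr
    _ = (cosh x)⁻¹ := by field_simp

theorem tendsto_kernelModeDeriv_atTop : Tendsto kernelModeDeriv atTop (𝓝 0) := by
  have h := tendsto_inv_cosh_atTop.mul (((tendsto_inv_cosh_atTop.pow 2).const_mul 2).sub_const 1)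
  rw [zero_mul] at h
  exact h

theorem L_injective_on_even_decaying_general (σ : ℝ → ℝ)
    (hreg : ContDiff ℝ 2 σ)
    (heven : ∀ ξ, σ (-ξ) = σ ξ)
    (htop : Filter.Tendsto σ Filter.atTop (nhds 0))
    (hker : ∀ ξ, deriv (deriv σ) ξ - σ ξ + 6 / Real.cosh ξ ^ 2 * σ ξ = 0) :
    ∀ ξ, σ ξ = 0 := by
  have hσ t : HasDerivAt σ (deriv σ t) t :=
    (hreg.differentiable (by norm_num) t).hasDerivAt
  have hσ' t : HasDerivAt (deriv σ) (kernelCoeff t * σ t) t :=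
    (hreg.differentiable_deriv_two t).hasDerivAt.congr_deriv
      (by rw [kernelCoeff]; linear_combination hker t)
  have hσ'_lim : Tendsto (deriv σ) atTop (𝓝 0) :=
    tendsto_deriv_atTop_zero hσ hσ' htop (by simpa using tendsto_kernelCoeff_atTop.mul htop)
  have hW_lim : Tendsto (fun s => σ s * kernelModeDeriv s - deriv σ s * kernelMode s) atTop
      (𝓝 0) := by
    simpa using (htop.mul tendsto_kernelModeDeriv_atTop).sub (hσ'_lim.mul tendsto_kernelMode_atTop)
  have hW := wronskian_eq_zero_of_tendsto_atTop hσ hσ' hasDerivAt_kernelMode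
    hasDerivAt_kernelModeDeriv hW_lim 0
  have h₀ : σ 0 = 0 := by
    simpa [kernelMode, kernelModeDeriv, show (2 : ℝ) - 1 ≠ 0 by norm_num] using hW
  have h₀' : deriv σ 0 = 0 := (Function.Even.deriv_odd heven).map_zero
  exact congrFun
    (eq_zero_of_second_order_linear_of_initial_eq_zero abs_kernelCoeff_le hσ hσ' h₀ h₀')

/-- If `σ : ℝ → ℝ` is a `C²` even function tending to `0` at `±∞` and
satisfying `σ'' − σ + (6/cosh²ξ)·σ = 0` on `ℝ`, then `σ ≡ 0`; i.e. `0` is not an eigenvalue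
of the operator `L` on even decaying functions. -/
theorem L_injective_on_even_decaying (σ : ℝ → ℝ)
    (hreg : ContDiff ℝ 2 σ)
    (heven : ∀ ξ, σ (-ξ) = σ ξ)
    (htop : Filter.Tendsto σ Filter.atTop (nhds 0))
    (hbot : Filter.Tendsto σ Filter.atBot (nhds 0))
    (hker : ∀ ξ, deriv (deriv σ) ξ - σ ξ + 6 / Real.cosh ξ ^ 2 * σ ξ = 0) :
    ∀ ξ, σ ξ = 0 :=
  L_injective_on_even_decaying_general σ hreg heven htop hker
end

section
/- Let λ > 0, S(ξ) = √(2/λ)/cosh(ξ), and let β be a real number such that β ≠ p(p+1)·λ/2 for every odd positive integer p. If σ : ℝ → ℝ is a twice continuously differentiable even function, square-integrable on ℝ, satisfying σ''(ξ) − σ(ξ) + β·S(ξ)²·σ(ξ) = 0 for all ξ ∈ ℝ, then σ is identically zero. -/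
/-!
Put `b = 2β/λ`, so that the equation reads `σ'' = (1 - b sech²) σ`. This operator maps
`tanh^n sech` to a combination of `tanh^(n-2) sech`, `tanh^n sech`, `tanh^(n+2) sech`, so the even
formal solution is `σ(0) ∑ c_k tanh^(2k) sech` with `c_(k+1) = (1 - b/((2k+1)(2k+2))) c_k`.
Its partial sums solve the equation up to a defect of size `k² |c_k| tanh^(2k)`, and Grönwall's
inequality shows that the series is `σ` on `[0, ∞)`. The product `c_k` converges to a limit `L`,
which is nonzero because no factor vanishes: this is where `β ≠ p(p+1)λ/2` for odd `p` enters.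
Abel's theorem in the variable `tanh² ξ → 1` then gives `σ(ξ)/cosh ξ → σ(0) L`, which square
integrability forces to be `0`. Hence `σ(0) = 0`, and the series vanishes identically.
-/

open Real Finset Filter Topology MeasureTheory

namespace Real

lemma one_sub_tanh_sq (x : ℝ) : 1 - tanh x ^ 2 = 1 / cosh x ^ 2 := by
  have := cosh_pos x
  rw [tanh_eq_sinh_div_cosh]
  field_simp
  linear_combination cosh_sq_sub_sinh_sq x

lemma hasDerivAt_tanh (x : ℝ) : HasDerivAt tanh (1 / cosh x ^ 2) x := by
  rw [show tanh = fun y => sinh y / cosh y from funext tanh_eq_sinh_div_cosh]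
  refine ((hasDerivAt_sinh x).fun_div (hasDerivAt_cosh x) (cosh_pos x).ne').congr_deriv ?_
  rw [← cosh_sq_sub_sinh_sq x]; ring

lemma tanh_strictMono : StrictMono tanh :=
  strictMono_of_hasDerivAt_pos hasDerivAt_tanh fun x => by positivity

lemma tendsto_cosh_atTop : Tendsto cosh atTop atTop :=
  tendsto_atTop_mono (fun x => by rw [cosh_eq]; linarith [exp_pos (-x)])
    (tendsto_exp_atTop.atTop_div_const two_pos)

lemma tendsto_tanh_sq_atTop : Tendsto (fun x => tanh x ^ 2) atTop (𝓝[<] 1) := by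
  refine tendsto_nhdsWithin_of_tendsto_nhds_of_eventually_within _ ?_
    (Eventually.of_forall tanh_sq_lt_one)
  have h := ((tendsto_pow_atTop two_ne_zero).comp tendsto_cosh_atTop).inv_tendsto_atTop.const_sub 1
  simp only [sub_zero] at h
  refine h.congr fun x => ?_
  rw [Pi.inv_apply, Function.comp_apply, inv_eq_one_div, ← one_sub_tanh_sq, sub_sub_cancel]

end Real

lemma tendsto_one_sub_mul_tsum_mul_pow {c : ℕ → ℝ} {l : ℝ} (hc : Tendsto c atTop (𝓝 l)) :
    Tendsto (fun x => (1 - x) * ∑' n, c n * x ^ n) (𝓝[<] 1) (𝓝 l) := by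
  -- `(1 - x) ∑ c n xⁿ = ∑ d n xⁿ` for the difference sequence `d`, whose partial sums are `c`
  set d : ℕ → ℝ := fun n => c n - if n = 0 then 0 else c (n - 1)
  have hd : ∀ n, ∑ i ∈ range (n + 1), d i = c n := by
    intro n
    induction n with
    | zero => simp [d]
    | succ n ih => rw [sum_range_succ, ih]; simp [d]
  have habel := Real.tendsto_tsum_powerSeries_nhdsWithin_lt (f := d)
    ((tendsto_add_atTop_iff_nat 1).1 (by simpa only [hd] using hc))
  refine habel.congr' ?_
  filter_upwards [Ioo_mem_nhdsLT (show (-1 : ℝ) < 1 by norm_num)] with x hx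
  obtain ⟨C, hC⟩ := hc.abs.bddAbove_range
  have hS : HasSum (fun n => c n * x ^ n) (∑' n, c n * x ^ n) := by
    refine (((summable_geometric_of_lt_one (abs_nonneg x) ?_).mul_left C).of_norm_bounded
      fun n => ?_).hasSum
    · exact abs_lt.2 hx
    · rw [Real.norm_eq_abs, abs_mul, abs_pow]
      gcongr
      exact hC ⟨n, rfl⟩
  have hshift := ((hasSum_nat_add_iff' (f := fun n => c n * x ^ n) 1).2 hS).sub (hS.mul_left x)
  refine ((hasSum_nat_add_iff' (f := fun n => d n * x ^ n) 1).1 ?_).tsum_eq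
  convert hshift using 1
  · ext n
    simp only [d, Nat.add_eq_zero_iff, one_ne_zero, and_false, ↓reduceIte, add_tsub_cancel_right]
    ring
  · simp only [d, range_one, sum_singleton, ↓reduceIte, sub_zero, pow_zero, mul_one]
    ring

theorem tendsto_of_approx_trajectories_ODE {E : Type*} [NormedAddCommGroup E] [NormedSpace ℝ E]
    {v : ℝ → E → E} {K : NNReal} (hv : ∀ t, LipschitzWith K (v t)) {f : ℝ → E}
    {g g' : ℕ → ℝ → E} {ε : ℕ → ℝ} {a T : ℝ} (haT : a ≤ T)
    (hf : ∀ t, HasDerivAt f (v t (f t)) t) (hg : ∀ n t, HasDerivAt (g n) (g' n t) t)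
    (hg_bound : ∀ n, ∀ t ∈ Set.Ico a T, dist (g' n t) (v t (g n t)) ≤ ε n)
    (hga : ∀ n, g n a = f a) (hε : Tendsto ε atTop (𝓝 0)) :
    Tendsto (fun n => g n T) atTop (𝓝 (f T)) := by
  have hG : Tendsto (fun n => gronwallBound 0 K (ε n) (T - a)) atTop (𝓝 0) := by
    have := ((gronwallBound_continuous_ε 0 K (T - a)).tendsto 0).comp hε
    rwa [gronwallBound_ε0, zero_mul] at this
  refine tendsto_iff_dist_tendsto_zero.2 (squeeze_zero (fun _ => dist_nonneg) (fun n => ?_) hG)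
  simpa only [zero_add, dist_comm] using dist_le_of_approx_trajectories_ODE hv
    (fun t _ => (hf t).continuousAt.continuousWithinAt) (fun t _ => (hf t).hasDerivWithinAt)
    (fun t _ => (dist_self _).le) (fun t _ => (hg n t).continuousAt.continuousWithinAt)
    (fun t _ => (hg n t).hasDerivWithinAt) (hg_bound n) (by rw [hga, dist_self]) T ⟨haT, le_rfl⟩

lemma not_integrable_of_eventually_le_norm {E : Type*} [NormedAddCommGroup E] {f : ℝ → E}
    {ε : ℝ} (hε : 0 < ε) (hf : ∀ᶠ x in atTop, ε ≤ ‖f x‖) : ¬ Integrable f := by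
  intro hint
  obtain ⟨R, hR⟩ := eventually_atTop.1 hf
  have hfin := (measure_mono (μ := volume) fun x (hx : x ∈ Set.Ici R) => hR x hx).trans_lt
    (hint.measure_norm_ge_lt_top hε)
  simp at hfin

lemma eq_zero_of_memLp_of_tendsto_div_cosh {f : ℝ → ℝ} {l : ℝ} (hf : MemLp f 2)
    (hlim : Tendsto (fun x => f x / cosh x) atTop (𝓝 l)) : l = 0 := by
  by_contra hl
  refine not_integrable_of_eventually_le_norm (by positivity : 0 < (|l| / 2) ^ 2) ?_
    hf.integrable_sq
  filter_upwards [hlim.abs.eventually (lt_mem_nhds (half_lt_self (abs_pos.2 hl)))] with x hx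
  rw [Real.norm_eq_abs, abs_pow]
  have : |f x / cosh x| ≤ |f x| := by
    rw [abs_div, abs_of_pos (cosh_pos x)]; exact div_le_self (abs_nonneg _) (one_le_cosh x)
  gcongr
  linarith

lemma Function.Even.deriv_zero {F : Type*} [NormedAddCommGroup F] [NormedSpace ℝ F]
    {f : ℝ → F} (hf : f.Even) : deriv f 0 = 0 := by
  have h := deriv_comp_neg f 0
  rw [show (fun x => f (-x)) = f from funext hf, neg_zero, ← sub_eq_zero, sub_neg_eq_add,
    ← two_smul ℝ, smul_eq_zero] at h
  exact h.resolve_left two_ne_zero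

namespace PoschlTeller

noncomputable def tanhPowSech (n : ℕ) (x : ℝ) : ℝ := tanh x ^ n / cosh x

noncomputable def tanhPowSechDeriv (n : ℕ) (x : ℝ) : ℝ :=
  n * tanhPowSech (n - 1) x - (n + 1) * tanhPowSech (n + 1) x

lemma tanhPowSech_add_two (n : ℕ) (x : ℝ) :
    tanhPowSech (n + 2) x = tanh x ^ 2 * tanhPowSech n x := by
  simp only [tanhPowSech]; ring

lemma tanhPowSech_zero_right (n : ℕ) : tanhPowSech n 0 = 0 ^ n := by
  simp [tanhPowSech]

lemma abs_tanhPowSech_le (n : ℕ) {x T : ℝ} (hx : 0 ≤ x) (hxT : x ≤ T) :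
    |tanhPowSech n x| ≤ tanh T ^ n := by
  have h0 : 0 ≤ tanh x := tanh_zero ▸ tanh_strictMono.monotone hx
  rw [tanhPowSech, abs_div, abs_of_pos (cosh_pos x), abs_pow, abs_of_nonneg h0]
  calc tanh x ^ n / cosh x ≤ tanh x ^ n := div_le_self (by positivity) (one_le_cosh x)
    _ ≤ tanh T ^ n := by gcongr; exact tanh_strictMono.monotone hxT

lemma hasDerivAt_tanhPowSech (n : ℕ) (x : ℝ) :
    HasDerivAt (tanhPowSech n) (tanhPowSechDeriv n x) x := by
  refine (((hasDerivAt_tanh x).fun_pow n).fun_div (hasDerivAt_cosh x)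
    (cosh_pos x).ne').congr_deriv ?_
  have hc := (cosh_pos x).ne'
  rw [← one_sub_tanh_sq x, show sinh x = tanh x * cosh x by rw [tanh_eq_sinh_div_cosh]; field_simp]
  rcases n with _ | n
  · simp only [tanhPowSechDeriv, tanhPowSech, CharP.cast_eq_zero, zero_tsub, pow_zero, pow_one,
      mul_one, zero_mul, one_mul, zero_sub, zero_add, one_div]
    field_simp
  · simp only [tanhPowSechDeriv, tanhPowSech, Nat.add_sub_cancel]
    field_simp
    push_cast
    ring

lemma hasDerivAt_tanhPowSechDeriv (n : ℕ) (x : ℝ) :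
    HasDerivAt (tanhPowSechDeriv n)
      (n * tanhPowSechDeriv (n - 1) x - (n + 1) * tanhPowSechDeriv (n + 1) x) x :=
  ((hasDerivAt_tanhPowSech (n - 1) x).const_mul _).sub
    ((hasDerivAt_tanhPowSech (n + 1) x).const_mul _)

lemma tanhPowSech_ode_residual (b : ℝ) (n : ℕ) (x : ℝ) :
    n * tanhPowSechDeriv (n - 1) x - (n + 1) * tanhPowSechDeriv (n + 1) x
        - (1 - b / cosh x ^ 2) * tanhPowSech n x
      = n * (n - 1) * (tanhPowSech (n - 2) x - tanhPowSech n x)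
        + ((n + 1) * (n + 2) - b) * (tanhPowSech (n + 2) x - tanhPowSech n x) := by
  rw [div_eq_mul_one_div b, ← one_sub_tanh_sq]
  rcases n with _ | m
  · simp only [tanhPowSechDeriv, tanhPowSech_add_two 0]
    push_cast
    ring
  · simp only [tanhPowSechDeriv, Nat.add_sub_cancel, show m + 1 - 2 = m - 1 by omega,
      show m + 1 + 1 - 1 = m + 1 by omega, show m + 1 + 1 + 1 = (m + 1) + 2 by omega,
      tanhPowSech_add_two (m + 1)]
    push_cast
    ring

noncomputable def coeff (b : ℝ) (k : ℕ) : ℝ :=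
  ∏ j ∈ range k, (1 - b / ((2 * j + 1) * (2 * j + 2)))

lemma mul_coeff_succ (b : ℝ) (k : ℕ) :
    (2 * k + 1) * (2 * k + 2) * coeff b (k + 1) = ((2 * k + 1) * (2 * k + 2) - b) * coeff b k := by
  have : (2 * k + 1) * (2 * k + 2) ≠ (0 : ℝ) := by positivity
  rw [coeff, prod_range_succ, ← coeff]
  field_simp

noncomputable def coeffLimit (b : ℝ) : ℝ :=
  ∏' j : ℕ, (1 - b / ((2 * j + 1) * (2 * j + 2)))

lemma summable_coeff_factor (b : ℝ) :
    Summable fun j : ℕ => b / ((2 * j + 1) * (2 * j + 2)) := by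
  have h : Summable fun j : ℕ => 1 / ((j : ℝ) + 1) ^ 2 := by
    simpa using (summable_nat_add_iff 1).2 (Real.summable_one_div_nat_pow.2 one_lt_two)
  refine (h.mul_left |b|).of_norm_bounded fun j => ?_
  have hd : ((j : ℝ) + 1) ^ 2 ≤ (2 * j + 1) * (2 * j + 2) := by nlinarith
  rw [norm_div, Real.norm_eq_abs, Real.norm_of_nonneg (by positivity), div_eq_mul_one_div]
  gcongr

lemma tendsto_coeff (b : ℝ) : Tendsto (coeff b) atTop (𝓝 (coeffLimit b)) := by
  have := (Real.multipliable_one_add_of_summable (summable_coeff_factor b).neg).hasProd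
  simp only [← sub_eq_add_neg] at this
  exact this.tendsto_prod_nat

lemma coeffLimit_ne_zero {b : ℝ} (hb : ∀ k : ℕ, b ≠ (2 * k + 1) * (2 * k + 2)) :
    coeffLimit b ≠ 0 := by
  have := tprod_one_add_ne_zero_of_summable (f := fun j : ℕ => -(b / ((2 * j + 1) * (2 * j + 2))))
    (fun k => ?_) (summable_coeff_factor b).neg.norm
  · simpa only [← sub_eq_add_neg, coeffLimit] using this
  · rw [← sub_eq_add_neg, sub_ne_zero, ne_comm, ne_eq, div_eq_one_iff_eq (by positivity)]
    exact hb k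

noncomputable def partialSum (b : ℝ) (M : ℕ) (x : ℝ) : ℝ :=
  ∑ k ∈ range (M + 1), coeff b k * tanhPowSech (2 * k) x

noncomputable def partialSumDeriv (b : ℝ) (M : ℕ) (x : ℝ) : ℝ :=
  ∑ k ∈ range (M + 1), coeff b k * tanhPowSechDeriv (2 * k) x

noncomputable def partialSumDefect (b : ℝ) (M : ℕ) (x : ℝ) : ℝ :=
  (2 * M + 1) * (2 * M + 2) * coeff b (M + 1) * (tanhPowSech (2 * M + 2) x - tanhPowSech (2 * M) x)

lemma hasDerivAt_partialSum (b : ℝ) (M : ℕ) (x : ℝ) :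
    HasDerivAt (partialSum b M) (partialSumDeriv b M x) x :=
  HasDerivAt.fun_sum fun k _ => (hasDerivAt_tanhPowSech (2 * k) x).const_mul (coeff b k)

lemma hasDerivAt_partialSumDeriv (b : ℝ) (M : ℕ) (x : ℝ) :
    HasDerivAt (partialSumDeriv b M)
      ((1 - b / cosh x ^ 2) * partialSum b M x + partialSumDefect b M x) x := by
  refine (HasDerivAt.fun_sum fun k _ =>
    (hasDerivAt_tanhPowSechDeriv (2 * k) x).const_mul (coeff b k)).congr_deriv ?_
  set H : ℕ → ℝ := fun k => 2 * k * (2 * k - 1) * coeff b k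
    * (tanhPowSech (2 * k) x - tanhPowSech (2 * k - 2) x)
  -- the recurrence for `coeff` makes the residuals of the modes telescope
  have step : ∀ k, coeff b k * ((2 * k : ℕ) * tanhPowSechDeriv (2 * k - 1) x
      - ((2 * k : ℕ) + 1) * tanhPowSechDeriv (2 * k + 1) x)
      = (1 - b / cosh x ^ 2) * (coeff b k * tanhPowSech (2 * k) x) + (H (k + 1) - H k) := by
    intro k
    have hres := tanhPowSech_ode_residual b (2 * k) x
    have hrec := mul_coeff_succ b k
    simp only [H, show 2 * (k + 1) = 2 * k + 2 by omega, show 2 * k + 2 - 2 = 2 * k by omega]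
    push_cast at hres ⊢
    linear_combination coeff b k * hres
      - (tanhPowSech (2 * k + 2) x - tanhPowSech (2 * k) x) * hrec
  rw [sum_congr rfl fun k _ => step k, sum_add_distrib, sum_range_sub, partialSum, mul_sum]
  simp only [H, partialSumDefect, show 2 * (M + 1) = 2 * M + 2 by omega,
    show 2 * M + 2 - 2 = 2 * M by omega]
  push_cast
  ring

lemma partialSum_zero_right (b : ℝ) (M : ℕ) : partialSum b M 0 = 1 := by
  simp [partialSum, sum_range_succ', tanhPowSech_zero_right, coeff]

lemma partialSumDeriv_zero_right (b : ℝ) (M : ℕ) : partialSumDeriv b M 0 = 0 := by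
  refine sum_eq_zero fun k _ => ?_
  rcases k with _ | k
  · simp [tanhPowSechDeriv, tanhPowSech_zero_right]
  · simp [tanhPowSechDeriv, tanhPowSech_zero_right, show 2 * (k + 1) - 1 ≠ 0 by omega]

lemma partialSum_mul_cosh (b : ℝ) (M : ℕ) (x : ℝ) :
    partialSum b M x * cosh x = ∑ k ∈ range (M + 1), coeff b k * (tanh x ^ 2) ^ k := by
  have := (cosh_pos x).ne'
  simp only [partialSum, sum_mul, tanhPowSech, ← pow_mul]
  exact sum_congr rfl fun k _ => by field_simp

lemma abs_partialSumDefect_le (b : ℝ) (M : ℕ) {x T : ℝ} (hx : 0 ≤ x) (hxT : x ≤ T) :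
    |partialSumDefect b M x| ≤ (2 * M + 1) * (2 * M + 2) * |coeff b (M + 1)| * (tanh T ^ 2) ^ M := by
  have hE : |tanhPowSech (2 * M + 2) x - tanhPowSech (2 * M) x| ≤ (tanh T ^ 2) ^ M := by
    have h1 : |tanh x ^ 2 - 1| ≤ 1 := by
      rw [abs_le]; constructor <;> nlinarith [tanh_sq_lt_one x, sq_nonneg (tanh x)]
    rw [tanhPowSech_add_two, ← sub_one_mul, abs_mul, ← pow_mul]
    exact le_trans (mul_le_of_le_one_left (abs_nonneg _) h1) (abs_tanhPowSech_le _ hx hxT)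
  rw [partialSumDefect, abs_mul, abs_mul, abs_of_pos (by positivity)]
  gcongr

lemma tendsto_partialSumDefect_bound (b : ℝ) {r : ℝ} (hr0 : 0 ≤ r) (hr1 : r < 1) :
    Tendsto (fun M : ℕ => (2 * M + 1) * (2 * M + 2) * |coeff b (M + 1)| * r ^ M) atTop (𝓝 0) := by
  have h k := tendsto_pow_const_mul_const_pow_of_lt_one k hr0 hr1
  have hpoly : Tendsto (fun M : ℕ => (2 * M + 1) * (2 * M + 2) * r ^ M) atTop (𝓝 0) := by
    simpa using (((h 2).const_mul 4).add ((h 1).const_mul 6)).add ((h 0).const_mul 2)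
      |>.congr fun M => by ring
  have hc := ((tendsto_coeff b).comp (tendsto_add_atTop_nat 1)).abs
  simpa using (hc.mul hpoly).congr fun M => by simp only [Function.comp]; ring

noncomputable def odeField (b t : ℝ) (p : ℝ × ℝ) : ℝ × ℝ :=
  (p.2, (1 - b / cosh t ^ 2) * p.1)

lemma lipschitzWith_odeField (b t : ℝ) : LipschitzWith (1 + ‖b‖₊) (odeField b t) := by
  refine ((LipschitzWith.prod_snd (α := ℝ) (β := ℝ)).prodMk
    ((lipschitzWith_smul (1 - b / cosh t ^ 2)).comp LipschitzWith.prod_fst)).weaken ?_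
  rw [mul_one]
  refine max_le le_self_add ?_
  rw [← NNReal.coe_le_coe]
  push_cast
  calc ‖1 - b / cosh t ^ 2‖ ≤ ‖(1 : ℝ)‖ + ‖b / cosh t ^ 2‖ := norm_sub_le _ _
    _ ≤ 1 + ‖b‖ := by
      rw [norm_one, norm_div, Real.norm_of_nonneg (r := cosh t ^ 2) (by positivity)]
      gcongr
      exact div_le_self (norm_nonneg b) (one_le_pow₀ (one_le_cosh t))

section ODE

variable {b : ℝ} {σ σ' : ℝ → ℝ}

lemma tendsto_partialSum_of_ode (hσ : ∀ x, HasDerivAt σ (σ' x) x)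
    (hσ' : ∀ x, HasDerivAt σ' ((1 - b / cosh x ^ 2) * σ x) x) (h0 : σ' 0 = 0)
    {T : ℝ} (hT : 0 ≤ T) :
    Tendsto (fun M => σ 0 * partialSum b M T) atTop (𝓝 (σ T)) := by
  have hr := tanh_sq_lt_one T
  have hε := (tendsto_partialSumDefect_bound b (sq_nonneg (tanh T)) hr).const_mul |σ 0|
  rw [mul_zero] at hε
  refine (tendsto_of_approx_trajectories_ODE (lipschitzWith_odeField b) hT
    (f := fun t => (σ t, σ' t)) (fun t => (hσ t).prodMk (hσ' t))
    (g := fun M t => (σ 0 * partialSum b M t, σ 0 * partialSumDeriv b M t))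
    (fun M t => ((hasDerivAt_partialSum b M t).const_mul (σ 0)).prodMk
      ((hasDerivAt_partialSumDeriv b M t).const_mul (σ 0)))
    (fun M t ht => ?_) (fun M => ?_) hε).fst_nhds
  · simp only [odeField, Prod.dist_eq, dist_self, Real.dist_eq]
    rw [show σ 0 * ((1 - b / cosh t ^ 2) * partialSum b M t + partialSumDefect b M t)
      - (1 - b / cosh t ^ 2) * (σ 0 * partialSum b M t) = σ 0 * partialSumDefect b M t by ring,
      abs_mul, max_eq_right (by positivity)]
    gcongr
    exact abs_partialSumDefect_le b M ht.1 ht.2.le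
  · simp [partialSum_zero_right, partialSumDeriv_zero_right, h0]

lemma hasSum_of_ode (hσ : ∀ x, HasDerivAt σ (σ' x) x)
    (hσ' : ∀ x, HasDerivAt σ' ((1 - b / cosh x ^ 2) * σ x) x) (h0 : σ' 0 = 0)
    {T : ℝ} (hT : 0 ≤ T) :
    HasSum (fun k => σ 0 * coeff b k * (tanh T ^ 2) ^ k) (σ T * cosh T) := by
  obtain ⟨C, hC⟩ := (tendsto_coeff b).abs.bddAbove_range
  have hsum : Summable fun k => σ 0 * coeff b k * (tanh T ^ 2) ^ k := by
    refine ((summable_geometric_of_lt_one (sq_nonneg _) (tanh_sq_lt_one T)).mul_left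
      (|σ 0| * C)).of_norm_bounded fun k => ?_
    rw [Real.norm_eq_abs, abs_mul, abs_mul, abs_of_nonneg (a := (tanh T ^ 2) ^ k) (by positivity)]
    gcongr
    exact hC ⟨k, rfl⟩
  refine hsum.hasSum_iff_tendsto_nat.2 ((tendsto_add_atTop_iff_nat 1).1 ?_)
  refine ((tendsto_partialSum_of_ode hσ hσ' h0 hT).mul_const (cosh T)).congr fun M => ?_
  rw [mul_assoc, partialSum_mul_cosh, mul_sum]
  simp only [mul_assoc]

lemma tendsto_div_cosh_of_ode (hσ : ∀ x, HasDerivAt σ (σ' x) x)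
    (hσ' : ∀ x, HasDerivAt σ' ((1 - b / cosh x ^ 2) * σ x) x) (h0 : σ' 0 = 0) :
    Tendsto (fun x => σ x / cosh x) atTop (𝓝 (σ 0 * coeffLimit b)) := by
  refine ((tendsto_one_sub_mul_tsum_mul_pow ((tendsto_coeff b).const_mul (σ 0))).comp
    tendsto_tanh_sq_atTop).congr' ?_
  filter_upwards [eventually_ge_atTop 0] with x hx
  have := (cosh_pos x).ne'
  rw [Function.comp_apply, (hasSum_of_ode hσ hσ' h0 hx).tsum_eq, one_sub_tanh_sq]
  field_simp

end ODE

end PoschlTeller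

open PoschlTeller

/-- Let `λ > 0`, `S(ξ) = √(2/λ)/cosh ξ`, and let `β ∈ ℝ` satisfy
`β ≠ p(p+1)λ/2` for every odd positive integer `p`. If `σ` is a `C²` even square-integrable
function with `σ'' − σ + β·S²·σ = 0` on `ℝ`, then `σ ≡ 0`. -/
theorem poschl_teller_no_even_L2_solution (lam : ℝ) (hlam : 0 < lam) (S : ℝ → ℝ)
    (hS : ∀ ξ, S ξ = Real.sqrt (2 / lam) / Real.cosh ξ)
    (β : ℝ) (hβ : ∀ p : ℕ, Odd p → 0 < p → β ≠ (p : ℝ) * ((p : ℝ) + 1) * lam / 2)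
    (σ : ℝ → ℝ)
    (hreg : ContDiff ℝ 2 σ)
    (heven : ∀ ξ, σ (-ξ) = σ ξ)
    (hL2 : MeasureTheory.MemLp σ 2 MeasureTheory.volume)
    (hode : ∀ ξ, deriv (deriv σ) ξ - σ ξ + β * S ξ ^ 2 * σ ξ = 0) :
    ∀ ξ, σ ξ = 0 := by
  set b := 2 * β / lam
  have hpot : ∀ ξ, β * S ξ ^ 2 = b / cosh ξ ^ 2 := fun ξ => by
    rw [hS, div_pow, sq_sqrt (by positivity)]; ring
  have hσ : ∀ x, HasDerivAt σ (deriv σ x) x :=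
    fun x => (hreg.differentiable two_ne_zero x).hasDerivAt
  have hσ' : ∀ x, HasDerivAt (deriv σ) ((1 - b / cosh x ^ 2) * σ x) x := fun x => by
    have h2 := ((contDiff_succ_iff_deriv (n := 1)).1 hreg).2.2.differentiable one_ne_zero
    exact (h2 x).hasDerivAt.congr_deriv (by linear_combination hode x - σ x * hpot x)
  have h0 : deriv σ 0 = 0 := Function.Even.deriv_zero heven
  have hb : ∀ k : ℕ, b ≠ (2 * k + 1) * (2 * k + 2) := fun k hk => by
    refine hβ (2 * k + 1) (odd_two_mul_add_one k) (by omega) ?_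
    rw [div_eq_iff hlam.ne'] at hk
    push_cast
    linarith
  have hσ0 : σ 0 = 0 := (mul_eq_zero.1 (eq_zero_of_memLp_of_tendsto_div_cosh hL2
    (tendsto_div_cosh_of_ode hσ hσ' h0))).resolve_right (coeffLimit_ne_zero hb)
  have hpos : ∀ t, 0 ≤ t → σ t = 0 := fun t ht => by
    have h := hasSum_of_ode hσ hσ' h0 ht
    simp only [hσ0, zero_mul] at h
    exact (mul_eq_zero.1 (h.unique hasSum_zero)).resolve_right (cosh_pos t).ne'
  intro ξ
  rcases le_total 0 ξ with h | h
  · exact hpos ξ h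
  · rw [← heven]
    exact hpos _ (neg_nonneg.2 h)
end

section
/- Let g(u) = Σ_{m≥1} g_m u^m be entire with real coefficients, g₁ = 1, and λ := (5/6)g₂² − (3/4)g₃ > 0. Suppose v₁, v₂, v₃ : ℝ² → ℝ are smooth functions of (τ, ξ), each 2π-periodic in τ, even in τ, even in ξ, such that v₁, ∂_ξ v₁, ∂²_ξ v₁ all tend to 0 as |ξ| → ∞ uniformly in τ, and satisfying: ∂²_τ v₁ + v₁ = 0; ∂²_τ v₂ + v₂ + g₂ v₁² = 0; and ∂²_τ v₃ + v₃ − (∂²_τ + ∂²_ξ) v₁ + 2 g₂ v₁ v₂ + g₃ v₁³ = 0. Then either v₁ is identically zero, or v₁(τ,ξ) = ±√(2/λ)·cos(τ)/cosh(ξ) for all (τ,ξ). -/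
open Real ContDiff intervalIntegral


lemma even_deriv_zero {f : ℝ → ℝ} (hf : ∀ x, f (-x) = f x) : deriv f 0 = 0 := by
  have h1 : deriv (fun x => f (-x)) 0 = deriv f 0 := by simp only [hf]
  have h2 : deriv (fun x => f (-x)) 0 = -deriv f 0 := by
    have := deriv_comp_neg f (0:ℝ); simpa using this
  linarith [h2.symm.trans h1]

lemma ode_zero {h h' : ℝ → ℝ} (hh : ∀ τ, HasDerivAt h (h' τ) τ)
    (hh' : ∀ τ, HasDerivAt h' (-(h τ)) τ) (h0 : h 0 = 0) (h0' : h' 0 = 0) :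
    ∀ τ, h τ = 0 := by
  set E : ℝ → ℝ := fun τ => h' τ ^ 2 + h τ ^ 2 with hE
  have hEd : ∀ τ, HasDerivAt E 0 τ := by
    intro τ
    have := ((hh' τ).pow 2).add ((hh τ).pow 2)
    refine this.congr_deriv (Eq.symm ?_); push_cast; ring
  have hconst : ∀ τ, E τ = E 0 :=
    fun τ => is_const_of_deriv_eq_zero (fun x => (hEd x).differentiableAt)
      (fun x => (hEd x).deriv) τ 0
  intro τ
  have h1 : h' τ ^ 2 + h τ ^ 2 = 0 := by
    have := hconst τ; simp only [hE, h0, h0'] at this; simpa using this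
  nlinarith [sq_nonneg (h τ), sq_nonneg (h' τ), h1]

lemma harmonic_sol {f : ℝ → ℝ} (hf : ContDiff ℝ ∞ f)
    (heq : ∀ τ, deriv (deriv f) τ + f τ = 0)
    (heven : ∀ τ, f (-τ) = f τ) : ∀ τ, f τ = f 0 * Real.cos τ := by
  have hdf : Differentiable ℝ f := hf.differentiable (by simp)
  have hf' : ContDiff ℝ ∞ (deriv f) := (contDiff_infty_iff_deriv.mp hf).2
  have hdf' : Differentiable ℝ (deriv f) := hf'.differentiable (by simp)
  set h : ℝ → ℝ := fun τ => f τ - f 0 * Real.cos τ with hH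
  set h' : ℝ → ℝ := fun τ => deriv f τ + f 0 * Real.sin τ with hH'
  have hh : ∀ τ, HasDerivAt h (h' τ) τ := by
    intro τ
    have := (hdf τ).hasDerivAt.sub ((Real.hasDerivAt_cos τ).const_mul (f 0))
    refine this.congr_deriv (Eq.symm ?_); simp [hH']; try ring
  have hh' : ∀ τ, HasDerivAt h' (-(h τ)) τ := by
    intro τ
    have := (hdf' τ).hasDerivAt.add ((Real.hasDerivAt_sin τ).const_mul (f 0))
    refine this.congr_deriv (Eq.symm ?_)
    have h2 : deriv (deriv f) τ = - f τ := by linarith [heq τ]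
    simp [hH, h2]; try ring
  have hz := ode_zero hh hh' (by simp [hH]) (by simp [hH', even_deriv_zero heven])
  intro τ
  have := hz τ; simp only [hH] at this; linarith

lemma periodic_deriv' {f : ℝ → ℝ} {T : ℝ} (hf : ∀ x, f (x + T) = f x) :
    ∀ x, deriv f (x + T) = deriv f x := by
  intro x
  rw [← deriv_comp_add_const]
  simp only [hf]

lemma periodic_ibp1 {u w : ℝ → ℝ} (hu : Differentiable ℝ u) (hw : Differentiable ℝ w)
    (hcu : Continuous (deriv u)) (hcw : Continuous (deriv w))
    (hup : ∀ x, u (x + 2*π) = u x) (hwp : ∀ x, w (x + 2*π) = w x) :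
    ∫ τ in (0:ℝ)..(2*π), deriv u τ * w τ = - ∫ τ in (0:ℝ)..(2*π), u τ * deriv w τ := by
  have h := integral_deriv_mul_eq_sub (a := 0) (b := 2*π) (u := u) (v := w) (u' := deriv u) (v' := deriv w)
    (fun x _ => (hu x).hasDerivAt) (fun x _ => (hw x).hasDerivAt)
    (hcu.intervalIntegrable _ _) (hcw.intervalIntegrable _ _)
  have hz : u (2*π) * w (2*π) - u 0 * w 0 = 0 := by
    have h1 := hup 0; have h2 := hwp 0
    rw [zero_add] at h1 h2; rw [h1, h2]; ring
  rw [hz] at h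
  have hsplit : ∫ τ in (0:ℝ)..(2*π), (deriv u τ * w τ + u τ * deriv w τ)
      = (∫ τ in (0:ℝ)..(2*π), deriv u τ * w τ) + ∫ τ in (0:ℝ)..(2*π), u τ * deriv w τ :=
    integral_add ((hcu.mul hw.continuous).intervalIntegrable _ _)
      ((hu.continuous.mul hcw).intervalIntegrable _ _)
  rw [hsplit] at h
  linarith

lemma periodic_ibp2 {u w : ℝ → ℝ} (hu : ContDiff ℝ ∞ u) (hw : ContDiff ℝ ∞ w)
    (hup : ∀ x, u (x + 2*π) = u x) (hwp : ∀ x, w (x + 2*π) = w x) :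
    ∫ τ in (0:ℝ)..(2*π), deriv (deriv u) τ * w τ
      = ∫ τ in (0:ℝ)..(2*π), u τ * deriv (deriv w) τ := by
  have hu' : ContDiff ℝ ∞ (deriv u) := (contDiff_infty_iff_deriv.mp hu).2
  have hw' : ContDiff ℝ ∞ (deriv w) := (contDiff_infty_iff_deriv.mp hw).2
  have e1 := periodic_ibp1 (hu'.differentiable (by simp)) (hw.differentiable (by simp))
    (hu'.continuous_deriv (by simp)) (hw.continuous_deriv (by simp))
    (periodic_deriv' hup) hwp
  have e2 := periodic_ibp1 (hu.differentiable (by simp)) (hw'.differentiable (by simp))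
    (hu.continuous_deriv (by simp)) (hw'.continuous_deriv (by simp))
    hup (periodic_deriv' hwp)
  rw [e1, e2]; ring

lemma int_cos_sq : ∫ τ in (0:ℝ)..(2*π), Real.cos τ ^ 2 = π := by
  rw [integral_cos_sq]; simp

lemma int_cos_quad : ∫ τ in (0:ℝ)..(2*π), Real.cos τ ^ 4 = 3*π/4 := by
  have := integral_cos_pow (a := 0) (b := 2*π) 2
  norm_num [integral_cos_sq] at this
  linarith [this]

lemma cossq_deriv : deriv (fun t => Real.cos t ^ 2) = fun t => -2 * Real.sin t * Real.cos t := by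
  funext t
  have : HasDerivAt (fun t => Real.cos t ^ 2) (2 * Real.cos t ^ 1 * -Real.sin t) t :=
    (Real.hasDerivAt_cos t).pow 2
  rw [this.deriv]; ring

lemma cossq_deriv2 : ∀ τ, deriv (deriv (fun t => Real.cos t ^ 2)) τ = 2 - 4 * Real.cos τ ^ 2 := by
  intro τ
  rw [cossq_deriv]
  have : HasDerivAt (fun t => -2 * Real.sin t * Real.cos t)
      ((-2 * Real.cos τ) * Real.cos τ + (-2 * Real.sin τ) * -Real.sin τ) τ :=
    (((Real.hasDerivAt_sin τ).const_mul (-2)).mul (Real.hasDerivAt_cos τ))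
  rw [this.deriv]
  have := Real.sin_sq_add_cos_sq τ
  nlinarith [this]

lemma cos_deriv2 : ∀ τ, deriv (deriv Real.cos) τ = - Real.cos τ := by
  intro τ; rw [Real.deriv_cos']; simp

lemma cos_smooth : ContDiff ℝ ∞ Real.cos := Real.contDiff_cos
lemma cossq_smooth : ContDiff ℝ ∞ (fun t => Real.cos t ^ 2) := Real.contDiff_cos.pow 2
lemma cos_per : ∀ x, Real.cos (x + 2*π) = Real.cos x := fun x => Real.cos_add_two_pi x
lemma cossq_per : ∀ x, Real.cos (x + 2*π) ^ 2 = Real.cos x ^ 2 := fun x => by rw [Real.cos_add_two_pi]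

lemma sech_unique {lam c : ℝ} (hl : 0 < lam) (hc : lam * c ^ 2 = 2)
    {S : ℝ → ℝ} (hS : ContDiff ℝ ∞ S)
    (hode : ∀ ξ, deriv (deriv S) ξ = S ξ - lam * S ξ ^ 3)
    (hbd : ∀ ξ, lam * S ξ ^ 2 ≤ 2)
    (h0 : S 0 = c) (h0' : deriv S 0 = 0) :
    ∀ ξ, 0 ≤ ξ → S ξ = c / Real.cosh ξ := by
  set W : ℝ → ℝ := fun ξ => c / Real.cosh ξ with hWdef
  set W1 : ℝ → ℝ := fun ξ => -c * Real.sinh ξ / Real.cosh ξ ^ 2 with hW1def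
  have hch : ∀ ξ, Real.cosh ξ ≠ 0 := fun ξ => ne_of_gt (Real.cosh_pos ξ)
  have hW1 : ∀ ξ, HasDerivAt W (W1 ξ) ξ := by
    intro ξ
    have h := (hasDerivAt_const ξ c).div (Real.hasDerivAt_cosh ξ) (hch ξ)
    refine h.congr_deriv (Eq.symm ?_)
    simp [hW1def]
  have hW2 : ∀ ξ, HasDerivAt W1 (W ξ - lam * W ξ ^ 3) ξ := by
    intro ξ
    have h := ((Real.hasDerivAt_sinh ξ).const_mul (-c)).div
      ((Real.hasDerivAt_cosh ξ).pow 2) (pow_ne_zero 2 (hch ξ))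
    refine h.congr_deriv (Eq.symm ?_)
    have hs : Real.sinh ξ ^ 2 = Real.cosh ξ ^ 2 - 1 := Real.sinh_sq ξ
    have hcp := Real.cosh_pos ξ
    simp only [hWdef, hW1def, Pi.pow_apply]
    field_simp
    linear_combination (-(c*Real.cosh ξ)) * hc + (-(2*c*Real.cosh ξ)) * hs
  have hWbd : ∀ ξ, lam * W ξ ^ 2 ≤ 2 := by
    intro ξ
    have h1 : W ξ ^ 2 ≤ c ^ 2 := by
      simp only [hWdef, div_pow]
      have := Real.one_le_cosh ξ
      have h2 : (1:ℝ) ≤ Real.cosh ξ ^ 2 := by nlinarith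
      calc c ^ 2 / Real.cosh ξ ^ 2 ≤ c ^ 2 / 1 :=
            div_le_div_of_nonneg_left (sq_nonneg c) zero_lt_one h2 |>.trans_eq rfl
        _ = c ^ 2 := by ring
    nlinarith [h1]
  -- difference functions
  set D : ℝ → ℝ := fun ξ => S ξ - W ξ with hDdef
  set D1 : ℝ → ℝ := fun ξ => deriv S ξ - W1 ξ with hD1def
  set D2 : ℝ → ℝ := fun ξ => (S ξ - lam * S ξ ^ 3) - (W ξ - lam * W ξ ^ 3) with hD2def
  have hSd : Differentiable ℝ S := hS.differentiable (by simp)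
  have hS' : ContDiff ℝ ∞ (deriv S) := (contDiff_infty_iff_deriv.mp hS).2
  have hD : ∀ ξ, HasDerivAt D (D1 ξ) ξ := fun ξ => ((hSd ξ).hasDerivAt).sub (hW1 ξ)
  have hD1 : ∀ ξ, HasDerivAt D1 (D2 ξ) ξ := by
    intro ξ
    have hs' : HasDerivAt (deriv S) (deriv (deriv S) ξ) ξ :=
      ((hS'.differentiable (by simp)) ξ).hasDerivAt
    rw [hode ξ] at hs'
    exact hs'.sub (hW2 ξ)
  set F : ℝ → ℝ × ℝ := fun ξ => (D ξ, D1 ξ) with hFdef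
  have hF : ∀ ξ, HasDerivAt F (D1 ξ, D2 ξ) ξ := fun ξ => (hD ξ).prodMk (hD1 ξ)
  have hbound : ∀ x, ‖(D1 x, D2 x)‖ ≤ 7 * ‖F x‖ := by
    intro x
    have hfac : D2 x = D x * (1 - lam * (S x ^ 2 + S x * W x + W x ^ 2)) := by
      simp only [hD2def, hDdef]; ring
    have habs : |D2 x| ≤ 7 * |D x| := by
      rw [hfac, abs_mul]
      have h7 : |1 - lam * (S x ^ 2 + S x * W x + W x ^ 2)| ≤ 7 := by
        rw [abs_le]
        constructor <;>
          nlinarith [hbd x, hWbd x, sq_nonneg (S x + W x), sq_nonneg (S x - W x),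
            mul_nonneg hl.le (sq_nonneg (S x)), mul_nonneg hl.le (sq_nonneg (W x)),
            mul_nonneg hl.le (sq_nonneg (S x + W x)), mul_nonneg hl.le (sq_nonneg (S x - W x))]
      calc |D x| * |1 - lam * (S x ^ 2 + S x * W x + W x ^ 2)| ≤ |D x| * 7 :=
            mul_le_mul_of_nonneg_left h7 (abs_nonneg _)
        _ = 7 * |D x| := by ring
    rw [Prod.norm_def, Prod.norm_def]
    simp only [Real.norm_eq_abs, hFdef]
    rw [mul_max_of_nonneg _ _ (by norm_num : (0:ℝ) ≤ 7)]
    apply max_le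
    · exact le_max_of_le_right (by nlinarith [abs_nonneg (D1 x)])
    · exact le_max_of_le_left (by linarith [habs])
  have hFcont : Continuous F := by
    apply Continuous.prodMk
    · exact (hSd.continuous).sub (continuous_const.div Real.continuous_cosh hch)
    · exact (hS.continuous_deriv (by simp)).sub
        ((continuous_const.mul Real.continuous_sinh).div (Real.continuous_cosh.pow 2)
          (fun x => pow_ne_zero 2 (hch x)))
  have hF0 : F 0 = 0 := by
    have hD0 : D 0 = 0 := by simp [hDdef, hWdef, h0, Real.cosh_zero]
    have hD10 : D1 0 = 0 := by simp [hD1def, hW1def, h0', Real.sinh_zero]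
    simp [hFdef, hD0, hD10, Prod.ext_iff]
  intro ξ hξ
  have key := norm_le_gronwallBound_of_norm_deriv_right_le (f := F) (f' := fun x => (D1 x, D2 x))
    (δ := 0) (K := 7) (ε := 0) (a := 0) (b := ξ)
    (hFcont.continuousOn)
    (fun x _ => (hF x).hasDerivWithinAt)
    (by simp [hF0])
    (fun x _ => by simpa using hbound x)
    ξ (Set.mem_Icc.mpr ⟨hξ, le_refl ξ⟩)
  rw [gronwallBound_ε0_δ0] at key
  have : F ξ = 0 := norm_le_zero_iff.mp key
  have hDz : D ξ = 0 := by
    have := congrArg Prod.fst this; simpa [hFdef] using this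
  have : S ξ - W ξ = 0 := hDz
  simp only [hWdef] at this
  linarith

lemma zero_unique {S : ℝ → ℝ} (hS : Differentiable ℝ S)
    (habs : ∀ ξ, |deriv S ξ| ≤ |S ξ|) (h0 : S 0 = 0) :
    ∀ ξ, 0 ≤ ξ → S ξ = 0 := by
  intro b hb
  have key := norm_le_gronwallBound_of_norm_deriv_right_le (f := S) (f' := deriv S)
    (δ := 0) (K := 1) (ε := 0) (a := 0) (b := b)
    hS.continuous.continuousOn
    (fun x _ => (hS x).hasDerivAt.hasDerivWithinAt)
    (by simp [h0])
    (fun x _ => by simpa [Real.norm_eq_abs] using habs x)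
    b ⟨hb, le_refl b⟩
  rw [gronwallBound_ε0_δ0] at key
  simpa using norm_le_zero_iff.mp key


set_option maxHeartbeats 2000000

/-- Let `g` be entire with real coefficients, `g₁ = 1`, and
`λ := (5/6)g₂² − (3/4)g₃ > 0`. If smooth functions `v₁,v₂,v₃(τ,ξ)`, `2π`-periodic and even
in `τ` and even in `ξ`, with `v₁, ∂_ξ v₁, ∂²_ξ v₁ → 0` uniformly in `τ` as `|ξ| → ∞`,
satisfy the first three coefficient equations of the `ε`-expansion, then either `v₁ ≡ 0`
or `v₁(τ,ξ) = ±√(2/λ)·cos τ / cosh ξ`. -/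
theorem first_coefficient_forced (g : ℕ → ℝ) (hg1 : g 1 = 1)
    (hent : ∀ u : ℝ, Summable fun m => g m * u ^ m)
    (lam : ℝ) (hlam : lam = 5 / 6 * g 2 ^ 2 - 3 / 4 * g 3) (hpos : 0 < lam)
    (v₁ v₂ v₃ : ℝ → ℝ → ℝ)
    (hprop : ∀ v ∈ [v₁, v₂, v₃],
      ContDiff ℝ (⊤ : ℕ∞) (fun p : ℝ × ℝ => v p.1 p.2) ∧
      (∀ τ ξ, v (τ + 2 * Real.pi) ξ = v τ ξ) ∧
      (∀ τ ξ, v (-τ) ξ = v τ ξ) ∧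
      (∀ τ ξ, v τ (-ξ) = v τ ξ))
    (hdecay : ∀ δ > 0, ∃ A : ℝ, ∀ τ ξ, A ≤ |ξ| →
      |v₁ τ ξ| < δ ∧ |deriv (fun ξ' => v₁ τ ξ') ξ| < δ ∧
      |deriv (deriv fun ξ' => v₁ τ ξ') ξ| < δ)
    (he1 : ∀ τ ξ, deriv (deriv fun τ' => v₁ τ' ξ) τ + v₁ τ ξ = 0)
    (he2 : ∀ τ ξ, deriv (deriv fun τ' => v₂ τ' ξ) τ + v₂ τ ξ + g 2 * v₁ τ ξ ^ 2 = 0)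
    (he3 : ∀ τ ξ, deriv (deriv fun τ' => v₃ τ' ξ) τ + v₃ τ ξ
        - (deriv (deriv fun τ' => v₁ τ' ξ) τ + deriv (deriv fun ξ' => v₁ τ ξ') ξ)
        + 2 * g 2 * v₁ τ ξ * v₂ τ ξ + g 3 * v₁ τ ξ ^ 3 = 0) :
    (∀ τ ξ, v₁ τ ξ = 0) ∨
    (∃ σ : ℝ, (σ = 1 ∨ σ = -1) ∧
      ∀ τ ξ, v₁ τ ξ = σ * Real.sqrt (2 / lam) * Real.cos τ / Real.cosh ξ) := by
  obtain ⟨h1c, h1p, h1τ, h1ξ⟩ := hprop v₁ (by simp)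
  obtain ⟨h2c, h2p, h2τ, h2ξ⟩ := hprop v₂ (by simp)
  obtain ⟨h3c, h3p, h3τ, h3ξ⟩ := hprop v₃ (by simp)
  have h1c' : ContDiff ℝ ∞ (fun p : ℝ × ℝ => v₁ p.1 p.2) := h1c.of_le (by simp)
  have h2c' : ContDiff ℝ ∞ (fun p : ℝ × ℝ => v₂ p.1 p.2) := h2c.of_le (by simp)
  have h3c' : ContDiff ℝ ∞ (fun p : ℝ × ℝ => v₃ p.1 p.2) := h3c.of_le (by simp)
  have sliceτ : ∀ (v : ℝ → ℝ → ℝ), ContDiff ℝ ∞ (fun p : ℝ × ℝ => v p.1 p.2) →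
      ∀ ξ, ContDiff ℝ ∞ (fun τ => v τ ξ) :=
    fun v hv ξ => hv.comp (contDiff_id.prodMk contDiff_const)
  have sliceξ : ∀ (v : ℝ → ℝ → ℝ), ContDiff ℝ ∞ (fun p : ℝ × ℝ => v p.1 p.2) →
      ∀ τ, ContDiff ℝ ∞ (fun ξ => v τ ξ) :=
    fun v hv τ => hv.comp (contDiff_const.prodMk contDiff_id)
  set S : ℝ → ℝ := fun ξ => v₁ 0 ξ with hSdef
  have hS : ContDiff ℝ ∞ S := sliceξ v₁ h1c' 0
  have hv1 : ∀ τ ξ, v₁ τ ξ = S ξ * Real.cos τ := by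
    intro τ ξ
    exact harmonic_sol (sliceτ v₁ h1c' ξ) (fun τ => he1 τ ξ) (fun τ => h1τ τ ξ) τ
  have hSdiff : Differentiable ℝ S := hS.differentiable (by simp)
  have hS' : ContDiff ℝ ∞ (deriv S) := (contDiff_infty_iff_deriv.mp hS).2
  have hS'diff : Differentiable ℝ (deriv S) := hS'.differentiable (by simp)
  have hder1 : ∀ τ ξ, deriv (fun ξ' => v₁ τ ξ') ξ = deriv S ξ * Real.cos τ := by
    intro τ ξ
    have he : (fun ξ' => v₁ τ ξ') = fun ξ' => S ξ' * Real.cos τ := funext fun ξ' => hv1 τ ξ'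
    rw [he, deriv_mul_const (hSdiff ξ)]
  have hder2 : ∀ τ ξ, deriv (deriv fun ξ' => v₁ τ ξ') ξ
      = deriv (deriv S) ξ * Real.cos τ := by
    intro τ ξ
    have he : (deriv fun ξ' => v₁ τ ξ') = fun ξ' => deriv S ξ' * Real.cos τ :=
      funext fun ξ' => hder1 τ ξ'
    rw [he, deriv_mul_const (hS'diff ξ)]
  -- the profile ODE
  have hODE : ∀ ξ, deriv (deriv S) ξ = S ξ - lam * S ξ ^ 3 := by
    intro ξ
    have hπ : (0:ℝ) < π := Real.pi_pos
    set u : ℝ → ℝ := fun τ => v₂ τ ξ with hudef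
    have hu : ContDiff ℝ ∞ u := sliceτ v₂ h2c' ξ
    have hu' : ContDiff ℝ ∞ (deriv u) := (contDiff_infty_iff_deriv.mp hu).2
    have hup : ∀ x, u (x + 2*π) = u x := fun x => h2p x ξ
    have hucont : Continuous u := hu.continuous
    have hu'cont : Continuous (deriv u) := hu.continuous_deriv (by simp)
    have hu''cont : Continuous (deriv (deriv u)) := hu'.continuous_deriv (by simp)
    have heu : ∀ τ, deriv (deriv u) τ = -u τ - (g 2 * S ξ ^ 2) * Real.cos τ ^ 2 := by
      intro τ
      have h := he2 τ ξ
      rw [hv1 τ ξ] at h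
      have hrfl : deriv (deriv u) τ = deriv (deriv fun τ' => v₂ τ' ξ) τ := rfl
      have hrfl2 : u τ = v₂ τ ξ := rfl
      rw [hrfl, hrfl2]
      linear_combination h
    have hint0 : ∫ τ in (0:ℝ)..(2*π), deriv (deriv u) τ = 0 := by
      rw [integral_deriv_eq_sub (fun x _ => (hu'.differentiable (by simp)) x)
        (hu''cont.intervalIntegrable _ _)]
      have h := periodic_deriv' hup 0
      rw [zero_add] at h
      rw [h]; ring
    set Iu := ∫ τ in (0:ℝ)..(2*π), u τ with hIu
    set Ku := ∫ τ in (0:ℝ)..(2*π), u τ * Real.cos τ ^ 2 with hKu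
    have hIuval : Iu = -(g 2 * S ξ ^ 2 * π) := by
      have h1 : ∫ τ in (0:ℝ)..(2*π), deriv (deriv u) τ
          = ∫ τ in (0:ℝ)..(2*π), (-u τ - (g 2 * S ξ ^ 2) * Real.cos τ ^ 2) :=
        integral_congr (fun τ _ => heu τ)
      rw [hint0] at h1
      rw [integral_sub (hucont.fun_neg.intervalIntegrable _ _)
        ((continuous_const.fun_mul (Real.continuous_cos.fun_pow 2)).intervalIntegrable _ _),
        integral_neg, integral_const_mul, int_cos_sq] at h1
      rw [hIu]; linarith
    have hKuval : Ku = -(5*π/12) * (g 2 * S ξ ^ 2) := by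
      have hlhs : ∫ τ in (0:ℝ)..(2*π), deriv (deriv u) τ * Real.cos τ ^ 2
          = 2 * Iu - 4 * Ku := by
        rw [periodic_ibp2 hu cossq_smooth hup cossq_per]
        have h2 : ∫ τ in (0:ℝ)..(2*π), u τ * deriv (deriv fun t => Real.cos t ^ 2) τ
            = ∫ τ in (0:ℝ)..(2*π), (2 * u τ - 4 * (u τ * Real.cos τ ^ 2)) := by
          apply integral_congr
          intro τ _
          dsimp only
          rw [cossq_deriv2 τ]; ring
        rw [h2, integral_sub ((continuous_const.fun_mul hucont).intervalIntegrable _ _)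
          ((continuous_const.fun_mul (hucont.fun_mul (Real.continuous_cos.fun_pow 2))).intervalIntegrable _ _),
          integral_const_mul, integral_const_mul]
      have hrhs : ∫ τ in (0:ℝ)..(2*π), deriv (deriv u) τ * Real.cos τ ^ 2
          = -Ku - (g 2 * S ξ ^ 2) * (3*π/4) := by
        have h3 : ∫ τ in (0:ℝ)..(2*π), deriv (deriv u) τ * Real.cos τ ^ 2
            = ∫ τ in (0:ℝ)..(2*π),
                (-(u τ * Real.cos τ ^ 2) - (g 2 * S ξ ^ 2) * Real.cos τ ^ 4) := by
          apply integral_congr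
          intro τ _
          dsimp only
          rw [heu τ]; ring
        rw [h3, integral_sub ((hucont.fun_mul (Real.continuous_cos.fun_pow 2)).fun_neg.intervalIntegrable _ _)
          ((continuous_const.fun_mul (Real.continuous_cos.fun_pow 4)).intervalIntegrable _ _),
          integral_neg, integral_const_mul, int_cos_quad]
      rw [hIuval] at hlhs
      have := hlhs.symm.trans hrhs
      nlinarith [this]
    set w : ℝ → ℝ := fun τ => v₃ τ ξ with hwdef
    have hw : ContDiff ℝ ∞ w := sliceτ v₃ h3c' ξ
    have hwp : ∀ x, w (x + 2*π) = w x := fun x => h3p x ξ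
    have hw''cont : Continuous (deriv (deriv w)) :=
      ((contDiff_infty_iff_deriv.mp hw).2).continuous_deriv (by simp)
    have hwzero : ∫ τ in (0:ℝ)..(2*π),
        (deriv (deriv w) τ * Real.cos τ + w τ * Real.cos τ) = 0 := by
      have h4 := periodic_ibp2 hw cos_smooth hwp cos_per
      have h5 : ∫ τ in (0:ℝ)..(2*π), w τ * deriv (deriv Real.cos) τ
          = ∫ τ in (0:ℝ)..(2*π), (-(w τ * Real.cos τ)) := by
        apply integral_congr; intro τ _; dsimp only; rw [cos_deriv2 τ]; ring
      rw [h5, integral_neg] at h4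
      rw [integral_add ((hw''cont.fun_mul Real.continuous_cos).intervalIntegrable _ _)
        ((hw.continuous.fun_mul Real.continuous_cos).intervalIntegrable _ _), h4]
      ring
    have hew : ∀ τ, deriv (deriv w) τ + w τ
        = (-(S ξ * Real.cos τ) + deriv (deriv S) ξ * Real.cos τ)
          - 2 * g 2 * (S ξ * Real.cos τ) * u τ - g 3 * (S ξ * Real.cos τ) ^ 3 := by
      intro τ
      have h := he3 τ ξ
      have h1 := he1 τ ξ
      rw [hv1 τ ξ] at h h1
      rw [hder2 τ ξ] at h
      have hrfl : deriv (deriv w) τ = deriv (deriv fun τ' => v₃ τ' ξ) τ := rfl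
      have hrfl2 : w τ = v₃ τ ξ := rfl
      have hrfl3 : u τ = v₂ τ ξ := rfl
      rw [hrfl, hrfl2, hrfl3]
      linear_combination h + h1
    have hmain : ∫ τ in (0:ℝ)..(2*π),
        (deriv (deriv w) τ * Real.cos τ + w τ * Real.cos τ)
        = (deriv (deriv S) ξ - S ξ) * π - (2 * g 2 * S ξ) * Ku
          - (g 3 * S ξ ^ 3) * (3*π/4) := by
      have h6 : ∀ τ, deriv (deriv w) τ * Real.cos τ + w τ * Real.cos τ
          = (deriv (deriv S) ξ - S ξ) * Real.cos τ ^ 2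
            - (2 * g 2 * S ξ) * (u τ * Real.cos τ ^ 2)
            - (g 3 * S ξ ^ 3) * Real.cos τ ^ 4 := by
        intro τ
        linear_combination Real.cos τ * hew τ
      have h7 : ∫ τ in (0:ℝ)..(2*π),
          (deriv (deriv w) τ * Real.cos τ + w τ * Real.cos τ)
          = ∫ τ in (0:ℝ)..(2*π),
            ((deriv (deriv S) ξ - S ξ) * Real.cos τ ^ 2
              - (2 * g 2 * S ξ) * (u τ * Real.cos τ ^ 2)
              - (g 3 * S ξ ^ 3) * Real.cos τ ^ 4) :=
        integral_congr (fun τ _ => h6 τ)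
      rw [h7, integral_sub
        (((continuous_const.fun_mul (Real.continuous_cos.fun_pow 2)).fun_sub
          (continuous_const.fun_mul (hucont.fun_mul (Real.continuous_cos.fun_pow 2)))).intervalIntegrable _ _)
        ((continuous_const.fun_mul (Real.continuous_cos.fun_pow 4)).intervalIntegrable _ _),
        integral_sub ((continuous_const.fun_mul (Real.continuous_cos.fun_pow 2)).intervalIntegrable _ _)
          ((continuous_const.fun_mul (hucont.fun_mul (Real.continuous_cos.fun_pow 2))).intervalIntegrable _ _),
        integral_const_mul, integral_const_mul, integral_const_mul, int_cos_sq, int_cos_quad]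
    have hfinal : (0:ℝ) = (deriv (deriv S) ξ - S ξ) * π - (2 * g 2 * S ξ) * Ku
        - (g 3 * S ξ ^ 3) * (3*π/4) := by rw [← hwzero, hmain]
    rw [hKuval] at hfinal
    have hfac : π * (deriv (deriv S) ξ - S ξ + lam * S ξ ^ 3) = 0 := by
      rw [hlam]; linear_combination -hfinal
    rcases mul_eq_zero.mp hfac with h' | h'
    · exact absurd h' (ne_of_gt hπ)
    · linarith
  -- energy identity
  have hEnergy : ∀ ξ, deriv S ξ ^ 2 = S ξ ^ 2 - lam/2 * S ξ ^ 4 := by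
    set E : ℝ → ℝ := fun ξ => deriv S ξ ^ 2 - S ξ ^ 2 + lam/2 * S ξ ^ 4 with hEdef
    have hEd : ∀ ξ, HasDerivAt E 0 ξ := by
      intro ξ
      have h1 : HasDerivAt S (deriv S ξ) ξ := (hSdiff ξ).hasDerivAt
      have h2 : HasDerivAt (deriv S) (deriv (deriv S) ξ) ξ := (hS'diff ξ).hasDerivAt
      have h3 := ((h2.pow 2).sub (h1.pow 2)).add ((h1.pow 4).const_mul (lam/2))
      refine h3.congr_deriv (Eq.symm ?_)
      rw [hODE ξ]; push_cast; ring
    have hEconst : ∀ ξ, E ξ = E 0 := fun ξ => is_const_of_deriv_eq_zero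
      (fun x => (hEd x).differentiableAt) (fun x => (hEd x).deriv) ξ 0
    have hE0 : E 0 = 0 := by
      by_contra hne
      set ε := |E 0| with hεdef
      have hεpos : 0 < ε := abs_pos.mpr hne
      set δ := min 1 (ε / (2 + lam)) with hδdef
      have hδpos : 0 < δ := lt_min one_pos (div_pos hεpos (by linarith))
      obtain ⟨A, hA⟩ := hdecay δ hδpos
      set ξ₀ := |A| + 1 with hξ₀
      have hge : A ≤ |ξ₀| := by
        have h1 : (0:ℝ) ≤ |A| + 1 := by positivity
        rw [hξ₀, abs_of_nonneg h1]
        linarith [le_abs_self A]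
      obtain ⟨hb1, hb2, hb3⟩ := hA 0 ξ₀ hge
      have hb1' : |S ξ₀| < δ := hb1
      have hb2' : |deriv S ξ₀| < δ := by
        have hr : (fun ξ' => v₁ 0 ξ') = S := rfl
        rw [hr] at hb2; exact hb2
      have hδ1 : δ ≤ 1 := min_le_left _ _
      have hδ2 : δ ≤ ε / (2 + lam) := min_le_right _ _
      have hδε : δ * (2 + lam) ≤ ε := (le_div_iff₀ (by linarith)).mp hδ2
      have ha2 : S ξ₀ ^ 2 < δ ^ 2 := by nlinarith [abs_lt.mp hb1', abs_nonneg (S ξ₀)]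
      have hbb : deriv S ξ₀ ^ 2 < δ ^ 2 := by
        nlinarith [abs_lt.mp hb2', abs_nonneg (deriv S ξ₀)]
      have hd2 : δ ^ 2 ≤ 1 := by nlinarith
      have h44 : S ξ₀ ^ 4 < δ ^ 4 := by
        nlinarith [ha2, sq_nonneg (S ξ₀), mul_pos hδpos hδpos]
      have hd4 : δ ^ 4 ≤ δ ^ 2 := by
        nlinarith [mul_nonneg (sq_nonneg δ) (by linarith : (0:ℝ) ≤ 1 - δ ^ 2)]
      have ha4 : S ξ₀ ^ 4 < δ ^ 2 := by linarith [h44, hd4]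
      have hδδ : δ ^ 2 ≤ δ := by nlinarith
      have hdlam : 0 ≤ δ * lam := mul_nonneg hδpos.le hpos.le
      have hεδ : δ ≤ ε := by nlinarith [hδε, hδpos, hpos]
      have ha4n : 0 ≤ lam / 2 * S ξ₀ ^ 4 := by positivity
      have hupp : lam / 2 * S ξ₀ ^ 4 < lam / 2 * δ ^ 2 :=
        mul_lt_mul_of_pos_left ha4 (by linarith)
      have hld : lam / 2 * δ ^ 2 ≤ lam / 2 * δ := by
        have : 0 ≤ lam / 2 * (δ - δ ^ 2) := mul_nonneg (by linarith) (by linarith)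
        linarith
      have hεup : δ + lam / 2 * δ ≤ ε := by nlinarith [hδε, hδpos, hpos]
      have hEξ : |E ξ₀| < ε := by
        rw [abs_lt]
        have hEval : E ξ₀ = deriv S ξ₀ ^ 2 - S ξ₀ ^ 2 + lam/2 * S ξ₀ ^ 4 := rfl
        rw [hEval]
        constructor
        · nlinarith [hbb, ha2, sq_nonneg (deriv S ξ₀), ha4n, hδδ, hεδ]
        · nlinarith [hbb, ha2, hupp, hld, hεup, sq_nonneg (S ξ₀), hδδ]
      rw [hEconst ξ₀] at hEξ
      rw [hεdef] at hEξ
      exact lt_irrefl _ hEξ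
    intro ξ
    have h := hEconst ξ
    rw [hE0] at h
    have h' : deriv S ξ ^ 2 - S ξ ^ 2 + lam/2 * S ξ ^ 4 = 0 := h
    linarith
  have hbound : ∀ ξ, lam * S ξ ^ 2 ≤ 2 := by
    intro ξ
    nlinarith [hEnergy ξ, sq_nonneg (deriv S ξ), sq_nonneg (S ξ),
      sq_nonneg (lam * S ξ ^ 2 - 2), sq_nonneg (S ξ ^ 2)]
  have hSeven : ∀ ξ, S (-ξ) = S ξ := fun ξ => h1ξ 0 ξ
  have hS'0 : deriv S 0 = 0 := even_deriv_zero hSeven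
  by_cases hS0 : S 0 = 0
  · left
    have habs : ∀ ξ, |deriv S ξ| ≤ |S ξ| := by
      intro ξ
      have h := hEnergy ξ
      have h4 : 0 ≤ S ξ ^ 4 := by positivity
      have hle : deriv S ξ ^ 2 ≤ S ξ ^ 2 := by nlinarith [mul_nonneg hpos.le h4]
      rw [← Real.sqrt_sq_eq_abs, ← Real.sqrt_sq_eq_abs]
      exact Real.sqrt_le_sqrt hle
    have hz := zero_unique hSdiff habs hS0
    have hzz : ∀ ξ, S ξ = 0 := by
      intro ξ
      rcases le_or_gt 0 ξ with h | h
      · exact hz ξ h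
      · rw [← hSeven ξ] at *; exact hz (-ξ) (by linarith)
    intro τ ξ; rw [hv1 τ ξ, hzz ξ]; ring
  · right
    have h2lam : lam * S 0 ^ 2 = 2 := by
      have h := hEnergy 0
      rw [hS'0] at h
      have key : S 0 ^ 2 * (2 - lam * S 0 ^ 2) = 0 := by linear_combination (-2) * h
      rcases mul_eq_zero.mp key with h' | h'
      · exact absurd (pow_eq_zero_iff (by norm_num) |>.mp h') hS0
      · linarith
    have hsz := sech_unique hpos h2lam hS hODE hbound rfl hS'0
    have hall : ∀ ξ, S ξ = S 0 / Real.cosh ξ := by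
      intro ξ
      rcases le_or_gt 0 ξ with h | h
      · exact hsz ξ h
      · have h2 := hsz (-ξ) (by linarith)
        rw [hSeven ξ, Real.cosh_neg] at h2
        exact h2
    have h2l : (0:ℝ) ≤ 2/lam := by positivity
    have hsq : Real.sqrt (2/lam) ^ 2 = 2/lam := Real.sq_sqrt h2l
    have hc2 : S 0 = Real.sqrt (2/lam) ∨ S 0 = -Real.sqrt (2/lam) := by
      have hS02 : S 0 ^ 2 = 2 / lam := by
        field_simp
        linarith [h2lam]
      have key : (S 0 - Real.sqrt (2/lam)) * (S 0 + Real.sqrt (2/lam)) = 0 := by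
        have : S 0 ^ 2 - Real.sqrt (2/lam) ^ 2 = 0 := by rw [hsq, hS02]; ring
        linear_combination this
      rcases mul_eq_zero.mp key with h' | h'
      · left; linarith
      · right; linarith
    rcases hc2 with h | h
    · exact ⟨1, Or.inl rfl, fun τ ξ => by rw [hv1 τ ξ, hall ξ, h]; ring⟩
    · exact ⟨-1, Or.inr rfl, fun τ ξ => by rw [hv1 τ ξ, hall ξ, h]; ring⟩
end

section
/- Let s > 1/2 be a real number and let a, b : ℤ → ℂ be two-sided sequences with |a|_s < ∞ and |b|_s < ∞. Then for every j ∈ ℤ the convolution c_j := Σ_{k∈ℤ} a_k·b_{j−k} converges absolutely, and the sequence c = (c_j) satisfies |c|_s ≤ 2^{s+1}·√(1 + 2ζ(2s))·|a|_s·|b|_s. (Equivalently: the periodic Sobolev space H^s is an algebra for s > 1/2, with the explicit multiplicative constant 2^{s+1}√(1 + 2ζ(2s)).) -/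
open Real
set_option maxHeartbeats 1000000

/-- A shear equivalence of `ℤ × ℤ`. -/
def shear : ℤ × ℤ ≃ ℤ × ℤ where
  toFun p := (p.1 + p.2, p.1)
  invFun p := (p.2, p.1 - p.2)
  left_inv p := by simp
  right_inv p := by simp

/-- Summability of pointwise product of two ℓ² sequences. -/
lemma summable_mul_of_sq (f g : ℤ → ℝ) (hf0 : ∀ k, 0 ≤ f k) (hg0 : ∀ k, 0 ≤ g k)
    (hf : Summable fun k => f k ^ 2) (hg : Summable fun k => g k ^ 2) :
    Summable fun k => f k * g k := by
  refine Summable.of_nonneg_of_le (fun k => mul_nonneg (hf0 k) (hg0 k))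
    (fun k => ?_) (((hf.add hg).div_const 2))
  have := sq_nonneg (f k - g k)
  nlinarith

/-- Cauchy–Schwarz for tsums of nonnegative sequences. -/
lemma tsum_mul_le_sqrt_mul_sqrt (f g : ℤ → ℝ) (hf0 : ∀ k, 0 ≤ f k) (hg0 : ∀ k, 0 ≤ g k)
    (hf : Summable fun k => f k ^ 2) (hg : Summable fun k => g k ^ 2) :
    (∑' k, f k * g k) ≤ Real.sqrt (∑' k, f k ^ 2) * Real.sqrt (∑' k, g k ^ 2) := by
  refine Summable.tsum_le_of_sum_le (summable_mul_of_sq f g hf0 hg0 hf hg) (fun u => ?_)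
  calc ∑ i ∈ u, f i * g i
      ≤ Real.sqrt (∑ i ∈ u, f i ^ 2) * Real.sqrt (∑ i ∈ u, g i ^ 2) :=
        Real.sum_mul_le_sqrt_mul_sqrt u f g
    _ ≤ Real.sqrt (∑' k, f k ^ 2) * Real.sqrt (∑' k, g k ^ 2) := by
        gcongr
        · exact Summable.sum_le_tsum u (fun i _ => sq_nonneg _) hf
        · exact Summable.sum_le_tsum u (fun i _ => sq_nonneg _) hg

/-- shifted sum over ℤ -/
lemma tsum_shift (v : ℤ → ℝ) (j : ℤ) : (∑' k, v (j - k)) = ∑' k, v k :=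
  ((Equiv.subLeft j).tsum_eq v)

lemma summable_shift (v : ℤ → ℝ) (hv : Summable v) (j : ℤ) :
    Summable fun k => v (j - k) :=
  ((Equiv.subLeft j).summable_iff (f := v)).2 hv

/-- Young's inequality ℓ²∗ℓ¹ → ℓ², squared form. -/
lemma young (u v : ℤ → ℝ) (hu0 : ∀ k, 0 ≤ u k) (hv0 : ∀ k, 0 ≤ v k)
    (hu : Summable fun k => u k ^ 2) (hv : Summable v) :
    Summable (fun j => (∑' k, u k * v (j - k)) ^ 2) ∧
    ∑' j, (∑' k, u k * v (j - k)) ^ 2 ≤ ((∑' k, v k) ^ 2) * ∑' k, u k ^ 2 := by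
  set V := ∑' k, v k with hV
  have hV0 : 0 ≤ V := tsum_nonneg hv0
  have hvleV : ∀ m, v m ≤ V := fun m => Summable.le_tsum hv m (fun n _ => hv0 n)
  -- define T
  set T : ℤ → ℝ := fun j => ∑' k, u k ^ 2 * v (j - k) with hT
  have hTsum : ∀ j, Summable fun k => u k ^ 2 * v (j - k) := by
    intro j
    refine Summable.of_nonneg_of_le (fun k => mul_nonneg (sq_nonneg _) (hv0 _))
      (fun k => ?_) (hu.mul_right V)
    exact mul_le_mul_of_nonneg_left (hvleV _) (sq_nonneg _)
  have hT0 : ∀ j, 0 ≤ T j := fun j => tsum_nonneg fun k => mul_nonneg (sq_nonneg _) (hv0 _)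
  -- pointwise Cauchy-Schwarz: C j ≤ √(T j) * √V
  have hCle : ∀ j, (∑' k, u k * v (j - k)) ≤ Real.sqrt (T j) * Real.sqrt V := by
    intro j
    have key : ∀ k, u k * v (j - k)
        = (u k * Real.sqrt (v (j - k))) * Real.sqrt (v (j - k)) := by
      intro k
      rw [mul_assoc, Real.mul_self_sqrt (hv0 _)]
    calc (∑' k, u k * v (j - k)) = ∑' k, (u k * Real.sqrt (v (j - k))) * Real.sqrt (v (j - k)) :=
          tsum_congr key
      _ ≤ Real.sqrt (∑' k, (u k * Real.sqrt (v (j - k))) ^ 2) *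
            Real.sqrt (∑' k, Real.sqrt (v (j - k)) ^ 2) := by
          refine tsum_mul_le_sqrt_mul_sqrt _ _
            (fun k => mul_nonneg (hu0 k) (Real.sqrt_nonneg _))
            (fun k => Real.sqrt_nonneg _) ?_ ?_
          · have : (fun k => (u k * Real.sqrt (v (j - k))) ^ 2)
                = fun k => u k ^ 2 * v (j - k) := by
              funext k; rw [mul_pow, Real.sq_sqrt (hv0 _)]
            rw [this]; exact hTsum j
          · have : (fun k => Real.sqrt (v (j - k)) ^ 2) = fun k => v (j - k) := by
              funext k; rw [Real.sq_sqrt (hv0 _)]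
            rw [this]; exact summable_shift v hv j
      _ = Real.sqrt (T j) * Real.sqrt V := by
          congr 1
          · congr 1
            exact tsum_congr fun k => by rw [mul_pow, Real.sq_sqrt (hv0 _)]
          · rw [show (∑' k, Real.sqrt (v (j - k)) ^ 2) = ∑' k, v (j - k) from
              tsum_congr fun k => Real.sq_sqrt (hv0 _), tsum_shift v j]
  have hCsq : ∀ j, (∑' k, u k * v (j - k)) ^ 2 ≤ T j * V := by
    intro j
    have h0 : 0 ≤ (∑' k, u k * v (j - k)) :=
      tsum_nonneg fun k => mul_nonneg (hu0 k) (hv0 _)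
    calc (∑' k, u k * v (j - k)) ^ 2 ≤ (Real.sqrt (T j) * Real.sqrt V) ^ 2 := by
          gcongr
          exact hCle j
      _ = T j * V := by
          rw [mul_pow, Real.sq_sqrt (hT0 j), Real.sq_sqrt hV0]
  -- double sum: summability of T and its value
  have hG : Summable (fun p : ℤ × ℤ => u p.2 ^ 2 * v (p.1 - p.2)) := by
    have he : Summable (fun p : ℤ × ℤ => u p.1 ^ 2 * v p.2) :=
      hu.mul_of_nonneg hv (fun k => sq_nonneg _) hv0
    refine (shear.summable_iff (f := fun p : ℤ × ℤ => u p.2 ^ 2 * v (p.1 - p.2))).1 ?_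
    have hcomp : (fun p : ℤ × ℤ => u p.2 ^ 2 * v (p.1 - p.2)) ∘ shear
        = fun p : ℤ × ℤ => u p.1 ^ 2 * v p.2 := by
      funext p
      simp [shear]
    rw [hcomp]
    exact he
  have hThasSum : HasSum T (∑' p : ℤ × ℤ, u p.2 ^ 2 * v (p.1 - p.2)) := by
    refine hG.hasSum.prod_fiberwise fun j => ?_
    exact (hG.prod_factor j).hasSum
  have hTsummable : Summable T := hThasSum.summable
  have hTtsum : ∑' j, T j = V * ∑' k, u k ^ 2 := by
    rw [hThasSum.tsum_eq]
    have he : Summable (fun p : ℤ × ℤ => u p.1 ^ 2 * v p.2) :=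
      hu.mul_of_nonneg hv (fun k => sq_nonneg _) hv0
    have h1 : ∑' p : ℤ × ℤ, u p.2 ^ 2 * v (p.1 - p.2)
        = ∑' p : ℤ × ℤ, u p.1 ^ 2 * v p.2 := by
      rw [← shear.tsum_eq (f := fun p : ℤ × ℤ => u p.2 ^ 2 * v (p.1 - p.2))]
      exact tsum_congr fun p => by simp [shear]
    have h2 : HasSum (fun b : ℤ => u b ^ 2 * ∑' k, v k) (∑' p : ℤ × ℤ, u p.1 ^ 2 * v p.2) :=
      he.hasSum.prod_fiberwise fun b => (hv.hasSum.mul_left _)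
    have h3 : HasSum (fun b : ℤ => u b ^ 2 * ∑' k, v k) ((∑' k, u k ^ 2) * ∑' k, v k) :=
      hu.hasSum.mul_right _
    rw [h1, h2.unique h3, mul_comm]
  constructor
  · refine Summable.of_nonneg_of_le (fun j => sq_nonneg _) (fun j => hCsq j)
      (hTsummable.mul_right V)
  · calc ∑' j, (∑' k, u k * v (j - k)) ^ 2 ≤ ∑' j, T j * V := by
          refine Summable.tsum_le_tsum hCsq ?_ (hTsummable.mul_right V)
          exact Summable.of_nonneg_of_le (fun j => sq_nonneg _) hCsq (hTsummable.mul_right V)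
      _ = (∑' j, T j) * V := tsum_mul_right
      _ = V ^ 2 * ∑' k, u k ^ 2 := by rw [hTtsum]; ring

/-- Minkowski inequality for tsums. -/
lemma minkowski_tsum (P Q : ℤ → ℝ) (hP0 : ∀ j, 0 ≤ P j) (hQ0 : ∀ j, 0 ≤ Q j)
    (hP : Summable fun j => P j ^ 2) (hQ : Summable fun j => Q j ^ 2) :
    Summable (fun j => (P j + Q j) ^ 2) ∧
    Real.sqrt (∑' j, (P j + Q j) ^ 2) ≤
      Real.sqrt (∑' j, P j ^ 2) + Real.sqrt (∑' j, Q j ^ 2) := by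
  have hPQ : Summable fun j => P j * Q j := summable_mul_of_sq P Q hP0 hQ0 hP hQ
  have hexp : ∀ j, (P j + Q j) ^ 2 = P j ^ 2 + 2 * (P j * Q j) + Q j ^ 2 := fun j => by ring
  have hsum : Summable (fun j => (P j + Q j) ^ 2) := by
    have := ((hP.add (hPQ.mul_left 2)).add hQ)
    refine this.congr fun j => ?_
    show P j ^ 2 + 2 * (P j * Q j) + Q j ^ 2 = _
    ring
  refine ⟨hsum, ?_⟩
  have h1 : ∑' j, (P j + Q j) ^ 2
      = (∑' j, P j ^ 2) + 2 * (∑' j, P j * Q j) + ∑' j, Q j ^ 2 := by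
    rw [tsum_congr hexp, Summable.tsum_add (hP.add (hPQ.mul_left 2)) hQ,
      Summable.tsum_add hP (hPQ.mul_left 2), tsum_mul_left]
  have h2 : ∑' j, (P j + Q j) ^ 2
      ≤ (Real.sqrt (∑' j, P j ^ 2) + Real.sqrt (∑' j, Q j ^ 2)) ^ 2 := by
    rw [h1, add_sq, Real.sq_sqrt (tsum_nonneg fun j => sq_nonneg _),
      Real.sq_sqrt (tsum_nonneg fun j => sq_nonneg _)]
    have := tsum_mul_le_sqrt_mul_sqrt P Q hP0 hQ0 hP hQ
    nlinarith
  calc Real.sqrt (∑' j, (P j + Q j) ^ 2)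
      ≤ Real.sqrt ((Real.sqrt (∑' j, P j ^ 2) + Real.sqrt (∑' j, Q j ^ 2)) ^ 2) :=
        Real.sqrt_le_sqrt h2
    _ = _ := Real.sqrt_sq (by positivity)

lemma zeta_summable (s : ℝ) (hs : 1 / 2 < s) :
    Summable (fun n : ℕ => ((n : ℝ) + 1) ^ (-(2 * s))) := by
  have h : Summable (fun n : ℕ => ((n : ℝ)) ^ (-(2 * s))) :=
    Real.summable_nat_rpow.2 (by linarith)
  have := (summable_nat_add_iff 1).2 h
  refine this.congr fun n => ?_
  push_cast
  ring_nf

lemma g_term_le (s : ℝ) (hs : 1 / 2 < s) (n : ℕ) :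
    (((1 : ℝ) + ((n : ℝ) + 1) ^ 2) ^ s)⁻¹ ≤ ((n : ℝ) + 1) ^ (-(2 * s)) := by
  have hb : (0 : ℝ) < (n : ℝ) + 1 := by positivity
  have h1 : ((n : ℝ) + 1) ^ (2 * s) ≤ (1 + ((n : ℝ) + 1) ^ 2) ^ s := by
    have : ((n : ℝ) + 1) ^ (2 * s) = (((n : ℝ) + 1) ^ (2 : ℕ)) ^ s := by
      rw [← Real.rpow_natCast ((n : ℝ) + 1) 2, ← Real.rpow_mul hb.le]
      norm_num
    rw [this]
    refine Real.rpow_le_rpow (by positivity) (by nlinarith) (by linarith)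
  have h2 : (0 : ℝ) < ((n : ℝ) + 1) ^ (2 * s) := Real.rpow_pos_of_pos hb _
  rw [Real.rpow_neg hb.le]
  exact inv_anti₀ h2 h1

lemma zeta_tail (s : ℝ) (hs : 1 / 2 < s) :
    Summable (fun k : ℤ => (((1 : ℝ) + (k : ℝ) ^ 2) ^ s)⁻¹) ∧
    ∑' k : ℤ, (((1 : ℝ) + (k : ℝ) ^ 2) ^ s)⁻¹
      ≤ 1 + 2 * ∑' n : ℕ, ((n : ℝ) + 1) ^ (-(2 * s)) := by
  set g : ℤ → ℝ := fun k => (((1 : ℝ) + (k : ℝ) ^ 2) ^ s)⁻¹ with hg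
  have hg0 : ∀ k, 0 ≤ g k := fun k => by positivity
  have hz := zeta_summable s hs
  have hz0 : (0:ℝ) ≤ ∑' n : ℕ, ((n : ℝ) + 1) ^ (-(2 * s)) :=
    tsum_nonneg fun n => Real.rpow_nonneg (by positivity) _
  have hshift : Summable (fun n : ℕ => g ((n : ℤ) + 1)) := by
    refine Summable.of_nonneg_of_le (fun n => hg0 _) (fun n => ?_) hz
    have : g ((n : ℤ) + 1) = (((1 : ℝ) + ((n : ℝ) + 1) ^ 2) ^ s)⁻¹ := by
      simp [hg]
    rw [this]
    exact g_term_le s hs n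
  have hshift_le : ∑' n : ℕ, g ((n : ℤ) + 1) ≤ ∑' n : ℕ, ((n : ℝ) + 1) ^ (-(2 * s)) := by
    refine Summable.tsum_le_tsum (fun n => ?_) hshift hz
    have : g ((n : ℤ) + 1) = (((1 : ℝ) + ((n : ℝ) + 1) ^ 2) ^ s)⁻¹ := by
      simp [hg]
    rw [this]
    exact g_term_le s hs n
  have hgnat : Summable (fun n : ℕ => g (n : ℤ)) := by
    refine (summable_nat_add_iff 1).1 (hshift.congr fun n => ?_)
    push_cast
    ring_nf
  have hneg : (fun n : ℕ => g (-((n : ℤ) + 1))) = fun n : ℕ => g ((n : ℤ) + 1) := by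
    funext n
    simp only [hg]
    norm_num
    ring_nf
  have hg00 : g 0 = 1 := by simp [hg]
  have hZ : HasSum g ((∑' n : ℕ, g (n : ℤ)) + ∑' n : ℕ, g ((n : ℤ) + 1)) := by
    refine HasSum.of_nat_of_neg_add_one hgnat.hasSum ?_
    rw [hneg]
    exact hshift.hasSum
  have hnat_split : ∑' n : ℕ, g (n : ℤ) = 1 + ∑' n : ℕ, g ((n : ℤ) + 1) := by
    rw [Summable.tsum_eq_zero_add hgnat]
    rw [show g ((0:ℕ) : ℤ) = 1 from hg00]
    congr 1
  refine ⟨hZ.summable, ?_⟩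
  rw [hZ.tsum_eq, hnat_split]
  linarith

lemma weight_aux (s : ℝ) (hs : 0 ≤ s) {x y : ℝ} (h : x ^ 2 ≤ y ^ 2) :
    (1 + (x + y) ^ 2) ^ (s / 2) ≤
      2 ^ s * ((1 + x ^ 2) ^ (s / 2) + (1 + y ^ 2) ^ (s / 2)) := by
  have h1 : (1 + (x + y) ^ 2) ^ (s / 2) ≤ (4 * (1 + y ^ 2)) ^ (s / 2) := by
    refine Real.rpow_le_rpow (by positivity) (by nlinarith) (by positivity)
  have h2 : ((4 : ℝ) * (1 + y ^ 2)) ^ (s / 2) = 2 ^ s * (1 + y ^ 2) ^ (s / 2) := by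
    rw [Real.mul_rpow (by norm_num) (by positivity)]
    congr 1
    rw [show (4 : ℝ) = 2 ^ (2 : ℝ) by norm_num [Real.rpow_natCast], ← Real.rpow_mul (by norm_num)]
    ring_nf
  have h3 : (0 : ℝ) ≤ (1 + x ^ 2) ^ (s / 2) := by positivity
  have h4 : (0 : ℝ) < (2 : ℝ) ^ s := Real.rpow_pos_of_pos (by norm_num) _
  calc (1 + (x + y) ^ 2) ^ (s / 2) ≤ 2 ^ s * (1 + y ^ 2) ^ (s / 2) := by rw [← h2]; exact h1
    _ ≤ 2 ^ s * ((1 + x ^ 2) ^ (s / 2) + (1 + y ^ 2) ^ (s / 2)) := by nlinarith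

lemma weight_ineq (s : ℝ) (hs : 0 ≤ s) (x y : ℝ) :
    (1 + (x + y) ^ 2) ^ (s / 2) ≤
      2 ^ s * ((1 + x ^ 2) ^ (s / 2) + (1 + y ^ 2) ^ (s / 2)) := by
  rcases le_total (x ^ 2) (y ^ 2) with h | h
  · exact weight_aux s hs h
  · have := weight_aux s hs h
    rw [add_comm y x] at this
    linarith

/-- For `s > 1/2` and two-sided sequences `a, b : ℤ → ℂ` with finite
weighted norms `|a|_s, |b|_s` (where `|a|_s² = Σ (1+k²)^s |a_k|²`), every convolution
coefficient `c_j = Σ_k a_k b_{j−k}` converges absolutely, and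
`|c|_s ≤ 2^{s+1}·√(1 + 2ζ(2s))·|a|_s·|b|_s`: the periodic Sobolev space `H^s` is an
algebra for `s > 1/2` with this explicit constant. -/
theorem sobolev_algebra (s : ℝ) (hs : 1 / 2 < s) (a b : ℤ → ℂ)
    (ha : Summable fun k : ℤ => (1 + (k : ℝ) ^ 2) ^ s * ‖a k‖ ^ 2)
    (hb : Summable fun k : ℤ => (1 + (k : ℝ) ^ 2) ^ s * ‖b k‖ ^ 2) :
    (∀ j : ℤ, Summable fun k : ℤ => ‖a k * b (j - k)‖) ∧
    ∀ c : ℤ → ℂ, (∀ j : ℤ, c j = ∑' k : ℤ, a k * b (j - k)) →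
      Summable (fun j : ℤ => (1 + (j : ℝ) ^ 2) ^ s * ‖c j‖ ^ 2) ∧
      Real.sqrt (∑' j : ℤ, (1 + (j : ℝ) ^ 2) ^ s * ‖c j‖ ^ 2) ≤
        (2 : ℝ) ^ (s + 1) *
          Real.sqrt (1 + 2 * ∑' n : ℕ, ((n : ℝ) + 1) ^ (-(2 * s))) *
          Real.sqrt (∑' k : ℤ, (1 + (k : ℝ) ^ 2) ^ s * ‖a k‖ ^ 2) *
          Real.sqrt (∑' k : ℤ, (1 + (k : ℝ) ^ 2) ^ s * ‖b k‖ ^ 2) := by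
  have hs0 : (0 : ℝ) ≤ s := by linarith
  -- weights
  set Vw : ℤ → ℝ := fun k => (1 + (k : ℝ) ^ 2) ^ (s / 2) with hVw
  have hVwpos : ∀ k, 0 < Vw k := fun k => Real.rpow_pos_of_pos (by positivity) _
  have hVw1 : ∀ k, 1 ≤ Vw k := by
    intro k
    have h := Real.rpow_le_rpow (by norm_num : (0:ℝ) ≤ 1)
      (by nlinarith [sq_nonneg ((k:ℝ))] : (1:ℝ) ≤ 1 + (k:ℝ) ^ 2)
      (by positivity : (0:ℝ) ≤ s / 2)
    rwa [Real.one_rpow] at h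
  have hVwsq : ∀ k, Vw k ^ 2 = (1 + (k : ℝ) ^ 2) ^ s := by
    intro k
    rw [hVw, ← Real.rpow_natCast ((1 + (k:ℝ)^2) ^ (s/2)) 2, ← Real.rpow_mul (by positivity)]
    norm_num
  set α : ℤ → ℝ := fun k => ‖a k‖ with hα
  set β : ℤ → ℝ := fun k => ‖b k‖ with hβ
  set A : ℤ → ℝ := fun k => Vw k * α k with hA
  set B : ℤ → ℝ := fun k => Vw k * β k with hB
  have hα0 : ∀ k, 0 ≤ α k := fun k => norm_nonneg _
  have hβ0 : ∀ k, 0 ≤ β k := fun k => norm_nonneg _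
  have hA0 : ∀ k, 0 ≤ A k := fun k => mul_nonneg (hVwpos k).le (hα0 k)
  have hB0 : ∀ k, 0 ≤ B k := fun k => mul_nonneg (hVwpos k).le (hβ0 k)
  have hA2eq : ∀ k, A k ^ 2 = (1 + (k : ℝ) ^ 2) ^ s * ‖a k‖ ^ 2 := by
    intro k; rw [hA]; simp only; rw [mul_pow, hVwsq]
  have hB2eq : ∀ k, B k ^ 2 = (1 + (k : ℝ) ^ 2) ^ s * ‖b k‖ ^ 2 := by
    intro k; rw [hB]; simp only; rw [mul_pow, hVwsq]
  have hA2 : Summable fun k => A k ^ 2 := ha.congr fun k => (hA2eq k).symm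
  have hB2 : Summable fun k => B k ^ 2 := hb.congr fun k => (hB2eq k).symm
  have hαA : ∀ k, α k ≤ A k := fun k => le_mul_of_one_le_left (hα0 k) (hVw1 k)
  have hβB : ∀ k, β k ≤ B k := fun k => le_mul_of_one_le_left (hβ0 k) (hVw1 k)
  have hα2 : Summable fun k => α k ^ 2 :=
    Summable.of_nonneg_of_le (fun k => sq_nonneg _)
      (fun k => pow_le_pow_left₀ (hα0 k) (hαA k) 2) hA2
  have hβ2 : Summable fun k => β k ^ 2 :=
    Summable.of_nonneg_of_le (fun k => sq_nonneg _)
      (fun k => pow_le_pow_left₀ (hβ0 k) (hβB k) 2) hB2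
  -- ℓ¹ bounds via zeta
  obtain ⟨hgsum, hgle⟩ := zeta_tail s hs
  set r : ℤ → ℝ := fun k => (Vw k)⁻¹ with hr
  have hr0 : ∀ k, 0 ≤ r k := fun k => inv_nonneg.2 (hVwpos k).le
  have hr2eq : ∀ k, r k ^ 2 = (((1 : ℝ) + (k : ℝ) ^ 2) ^ s)⁻¹ := by
    intro k; rw [hr]; simp only; rw [inv_pow, hVwsq]
  have hr2 : Summable fun k => r k ^ 2 := hgsum.congr fun k => (hr2eq k).symm
  have hrA : ∀ k, α k = r k * A k := by
    intro k; rw [hr, hA]; simp only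
    rw [inv_mul_cancel_left₀ (hVwpos k).ne']
  have hrB : ∀ k, β k = r k * B k := by
    intro k; rw [hr, hB]; simp only
    rw [inv_mul_cancel_left₀ (hVwpos k).ne']
  have hα1 : Summable α :=
    (summable_mul_of_sq r A hr0 hA0 hr2 hA2).congr fun k => (hrA k).symm
  have hβ1 : Summable β :=
    (summable_mul_of_sq r B hr0 hB0 hr2 hB2).congr fun k => (hrB k).symm
  -- notations for norms
  set NA := Real.sqrt (∑' k, A k ^ 2) with hNA
  set NB := Real.sqrt (∑' k, B k ^ 2) with hNB
  set Z := 1 + 2 * ∑' n : ℕ, ((n : ℝ) + 1) ^ (-(2 * s)) with hZ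
  have hZ0 : 0 ≤ Z := by
    have : (0:ℝ) ≤ ∑' n : ℕ, ((n : ℝ) + 1) ^ (-(2 * s)) :=
      tsum_nonneg fun n => Real.rpow_nonneg (by positivity) _
    rw [hZ]; linarith
  have hNA0 : 0 ≤ NA := Real.sqrt_nonneg _
  have hNB0 : 0 ≤ NB := Real.sqrt_nonneg _
  have hVα : (∑' k, α k) ≤ Real.sqrt Z * NA := by
    calc (∑' k, α k) = ∑' k, r k * A k := tsum_congr hrA
      _ ≤ Real.sqrt (∑' k, r k ^ 2) * Real.sqrt (∑' k, A k ^ 2) :=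
          tsum_mul_le_sqrt_mul_sqrt r A hr0 hA0 hr2 hA2
      _ ≤ Real.sqrt Z * NA := by
          rw [hNA]
          gcongr
          exact (tsum_congr hr2eq).trans_le hgle
  have hVβ : (∑' k, β k) ≤ Real.sqrt Z * NB := by
    calc (∑' k, β k) = ∑' k, r k * B k := tsum_congr hrB
      _ ≤ Real.sqrt (∑' k, r k ^ 2) * Real.sqrt (∑' k, B k ^ 2) :=
          tsum_mul_le_sqrt_mul_sqrt r B hr0 hB0 hr2 hB2
      _ ≤ Real.sqrt Z * NB := by
          rw [hNB]
          gcongr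
          exact (tsum_congr hr2eq).trans_le hgle
  have hVα0 : 0 ≤ ∑' k, α k := tsum_nonneg hα0
  have hVβ0 : 0 ≤ ∑' k, β k := tsum_nonneg hβ0
  -- part 1
  have hpart1 : ∀ j : ℤ, Summable fun k : ℤ => ‖a k * b (j - k)‖ := by
    intro j
    have hsh : Summable fun k => β (j - k) ^ 2 :=
      summable_shift (fun k => β k ^ 2) hβ2 j
    refine (summable_mul_of_sq α (fun k => β (j - k)) hα0 (fun k => hβ0 _) hα2 hsh).congr
      fun k => ?_
    rw [norm_mul]
  refine ⟨hpart1, ?_⟩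
  intro c hc
  -- convolution pieces
  set P : ℤ → ℝ := fun j => ∑' k, A k * β (j - k) with hP
  set Q : ℤ → ℝ := fun j => ∑' k, B k * α (j - k) with hQ
  have hP0 : ∀ j, 0 ≤ P j := fun j => tsum_nonneg fun k => mul_nonneg (hA0 k) (hβ0 _)
  have hQ0 : ∀ j, 0 ≤ Q j := fun j => tsum_nonneg fun k => mul_nonneg (hB0 k) (hα0 _)
  obtain ⟨hPsq, hPle⟩ := young A β hA0 hβ0 hA2 hβ1
  obtain ⟨hQsq, hQle⟩ := young B α hB0 hα0 hB2 hα1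
  -- summabilities of the mixed products
  have hsumAβ : ∀ j, Summable fun k => A k * β (j - k) := fun j =>
    summable_mul_of_sq A (fun k => β (j - k)) hA0 (fun k => hβ0 _) hA2
      (summable_shift (fun k => β k ^ 2) hβ2 j)
  have hsumαB : ∀ j, Summable fun k => α k * B (j - k) := fun j =>
    summable_mul_of_sq α (fun k => B (j - k)) hα0 (fun k => hB0 _) hα2
      (summable_shift (fun k => B k ^ 2) hB2 j)
  have hQalt : ∀ j, (∑' k, α k * B (j - k)) = Q j := by
    intro j
    have h := (Equiv.subLeft j).tsum_eq (f := fun k => α k * B (j - k))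
    rw [hQ]
    simp only
    rw [← h]
    refine tsum_congr fun k => ?_
    simp only [Equiv.subLeft_apply, sub_sub_cancel]
    ring
  -- key pointwise bound
  have hkey : ∀ j, Vw j * ‖c j‖ ≤ 2 ^ s * (P j + Q j) := by
    intro j
    have h1 : ‖c j‖ ≤ ∑' k, α k * β (j - k) := by
      rw [hc j]
      refine (norm_tsum_le_tsum_norm (hpart1 j)).trans_eq ?_
      exact tsum_congr fun k => norm_mul _ _
    have h2 : Vw j * ‖c j‖ ≤ Vw j * ∑' k, α k * β (j - k) :=
      mul_le_mul_of_nonneg_left h1 (hVwpos j).le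
    have h3 : Vw j * (∑' k, α k * β (j - k)) = ∑' k, Vw j * (α k * β (j - k)) :=
      (tsum_mul_left).symm
    have h4 : (∑' k, Vw j * (α k * β (j - k)))
        ≤ ∑' k, 2 ^ s * (A k * β (j - k) + α k * B (j - k)) := by
      refine Summable.tsum_le_tsum (fun k => ?_) ?_ ?_
      · have hw : Vw j ≤ 2 ^ s * (Vw k + Vw (j - k)) := by
          have hx := weight_ineq s hs0 (k : ℝ) ((j - k : ℤ) : ℝ)
          have hxy : (k : ℝ) + ((j - k : ℤ) : ℝ) = (j : ℝ) := by push_cast; ring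
          rw [hxy] at hx
          exact hx
        have hnn : 0 ≤ α k * β (j - k) := mul_nonneg (hα0 k) (hβ0 _)
        calc Vw j * (α k * β (j - k))
            ≤ (2 ^ s * (Vw k + Vw (j - k))) * (α k * β (j - k)) :=
              mul_le_mul_of_nonneg_right hw hnn
          _ = 2 ^ s * (A k * β (j - k) + α k * B (j - k)) := by
              rw [hA, hB]; simp only; ring
      · exact ((summable_mul_of_sq α (fun k => β (j - k)) hα0 (fun k => hβ0 _) hα2
          (summable_shift (fun k => β k ^ 2) hβ2 j)).mul_left _)
      · exact Summable.mul_left _ ((hsumAβ j).add (hsumαB j))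
    have h5 : (∑' k, 2 ^ s * (A k * β (j - k) + α k * B (j - k)))
        = 2 ^ s * (P j + Q j) := by
      rw [tsum_mul_left, Summable.tsum_add (hsumAβ j) (hsumαB j), hQalt j]
    calc Vw j * ‖c j‖ ≤ Vw j * ∑' k, α k * β (j - k) := h2
      _ = ∑' k, Vw j * (α k * β (j - k)) := h3
      _ ≤ ∑' k, 2 ^ s * (A k * β (j - k) + α k * B (j - k)) := h4
      _ = 2 ^ s * (P j + Q j) := h5
  have h2s0 : (0:ℝ) < 2 ^ s := Real.rpow_pos_of_pos (by norm_num) s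
  have hsq : ∀ j : ℤ, (1 + (j : ℝ) ^ 2) ^ s * ‖c j‖ ^ 2 ≤ (2 ^ s) ^ 2 * (P j + Q j) ^ 2 := by
    intro j
    have : (1 + (j : ℝ) ^ 2) ^ s * ‖c j‖ ^ 2 = (Vw j * ‖c j‖) ^ 2 := by
      rw [mul_pow, hVwsq]
    rw [this, ← mul_pow]
    refine pow_le_pow_left₀ (mul_nonneg (hVwpos j).le (norm_nonneg _)) (hkey j) 2
  obtain ⟨hPQsq, hPQle⟩ := minkowski_tsum P Q hP0 hQ0 hPsq hQsq
  have hsumc : Summable (fun j : ℤ => (1 + (j : ℝ) ^ 2) ^ s * ‖c j‖ ^ 2) := by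
    refine Summable.of_nonneg_of_le (fun j => ?_) hsq (hPQsq.mul_left _)
    positivity
  refine ⟨hsumc, ?_⟩
  -- final chain
  have step1 : Real.sqrt (∑' j : ℤ, (1 + (j : ℝ) ^ 2) ^ s * ‖c j‖ ^ 2)
      ≤ 2 ^ s * Real.sqrt (∑' j, (P j + Q j) ^ 2) := by
    calc Real.sqrt (∑' j : ℤ, (1 + (j : ℝ) ^ 2) ^ s * ‖c j‖ ^ 2)
        ≤ Real.sqrt (∑' j, (2 ^ s) ^ 2 * (P j + Q j) ^ 2) :=
          Real.sqrt_le_sqrt (Summable.tsum_le_tsum hsq hsumc (hPQsq.mul_left _))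
      _ = 2 ^ s * Real.sqrt (∑' j, (P j + Q j) ^ 2) := by
          rw [tsum_mul_left, Real.sqrt_mul (by positivity),
            Real.sqrt_sq h2s0.le]
  have hPnorm : Real.sqrt (∑' j, P j ^ 2) ≤ (∑' k, β k) * NA := by
    calc Real.sqrt (∑' j, P j ^ 2)
        ≤ Real.sqrt ((∑' k, β k) ^ 2 * ∑' k, A k ^ 2) := Real.sqrt_le_sqrt hPle
      _ = (∑' k, β k) * NA := by
          rw [Real.sqrt_mul (sq_nonneg _), Real.sqrt_sq hVβ0, hNA]
  have hQnorm : Real.sqrt (∑' j, Q j ^ 2) ≤ (∑' k, α k) * NB := by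
    calc Real.sqrt (∑' j, Q j ^ 2)
        ≤ Real.sqrt ((∑' k, α k) ^ 2 * ∑' k, B k ^ 2) := Real.sqrt_le_sqrt hQle
      _ = (∑' k, α k) * NB := by
          rw [Real.sqrt_mul (sq_nonneg _), Real.sqrt_sq hVα0, hNB]
  have step2 : Real.sqrt (∑' j, (P j + Q j) ^ 2)
      ≤ Real.sqrt Z * NB * NA + Real.sqrt Z * NA * NB := by
    calc Real.sqrt (∑' j, (P j + Q j) ^ 2)
        ≤ Real.sqrt (∑' j, P j ^ 2) + Real.sqrt (∑' j, Q j ^ 2) := hPQle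
      _ ≤ (∑' k, β k) * NA + (∑' k, α k) * NB := add_le_add hPnorm hQnorm
      _ ≤ Real.sqrt Z * NB * NA + Real.sqrt Z * NA * NB := by
          gcongr
  have hfin : Real.sqrt (∑' j : ℤ, (1 + (j : ℝ) ^ 2) ^ s * ‖c j‖ ^ 2)
      ≤ 2 ^ (s + 1) * Real.sqrt Z * NA * NB := by
    calc Real.sqrt (∑' j : ℤ, (1 + (j : ℝ) ^ 2) ^ s * ‖c j‖ ^ 2)
        ≤ 2 ^ s * Real.sqrt (∑' j, (P j + Q j) ^ 2) := step1
      _ ≤ 2 ^ s * (Real.sqrt Z * NB * NA + Real.sqrt Z * NA * NB) := by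
          exact mul_le_mul_of_nonneg_left step2 h2s0.le
      _ = 2 ^ (s + 1) * Real.sqrt Z * NA * NB := by
          rw [Real.rpow_add (by norm_num), Real.rpow_one]
          ring
  have hNAeq : NA = Real.sqrt (∑' k : ℤ, (1 + (k : ℝ) ^ 2) ^ s * ‖a k‖ ^ 2) := by
    rw [hNA]; congr 1; exact tsum_congr hA2eq
  have hNBeq : NB = Real.sqrt (∑' k : ℤ, (1 + (k : ℝ) ^ 2) ^ s * ‖b k‖ ^ 2) := by
    rw [hNB]; congr 1; exact tsum_congr hB2eq
  rw [← hNAeq, ← hNBeq]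
  exact hfin
end
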